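/- arXiv:1611.05252 — 13 statements merged into one kernel-verified Lean document; each statement's English description precedes it below -/
import Mathlib

section
/- For all n ≥ 0, x^n = ∑_{k=0}^{⌊n/2⌋} (C(n,k) - C(n,k-1)) F_{n-2k}(x), where F_m(x) are the special Fibonacci polynomials. -/
open Finset Polynomial

noncomputable def Fz (F : ℕ → Polynomial ℚ) : ℤ → Polynomial ℚ
  | Int.ofNat a => F a
  | Int.negSucc j => if j = 0 then 0 else -F (j - 1)

lemma Fz_natCast (F : ℕ → Polynomial ℚ) (a : ℕ) : Fz F (a : ℤ) = F a := rfl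

lemma Fz_neg_one (F : ℕ → Polynomial ℚ) : Fz F (-1) = 0 := rfl

lemma Fz_negSub (F : ℕ → Polynomial ℚ) (a : ℕ) : Fz F (-(a : ℤ) - 2) = -F a := by
  have : -(a : ℤ) - 2 = Int.negSucc (a + 1) := by
    rw [Int.negSucc_eq]; push_cast; ring
  rw [this]; simp [Fz]

lemma Fz_neg (F : ℕ → Polynomial ℚ) (m : ℤ) : Fz F (-m - 2) = -Fz F m := by
  rcases m with a | j
  · have : Int.ofNat a = (a : ℤ) := rfl
    rw [this, Fz_negSub, Fz_natCast]
  · rcases Nat.eq_zero_or_pos j with rfl | hj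
    · have h1 : -(Int.negSucc 0) - 2 = -1 := by decide
      rw [h1, Fz_neg_one]
      simp [Fz]
    · obtain ⟨b, rfl⟩ := Nat.exists_eq_add_of_le hj
      have : -(Int.negSucc (1 + b)) - 2 = (b : ℤ) := by
        rw [Int.negSucc_eq]; push_cast; ring
      rw [this, Fz_natCast]
      simp [Fz, Nat.add_comm 1 b]

lemma X_mul_Fz (F : ℕ → Polynomial ℚ)
    (h0 : F 0 = 1) (h1 : F 1 = X)
    (hrec : ∀ n, F (n + 2) = X * F (n + 1) - F n) (m : ℤ) :
    X * Fz F m = Fz F (m + 1) + Fz F (m - 1) := by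
  have key : ∀ a : ℕ, X * F (a + 1) = F (a + 2) + F a := by
    intro a; rw [hrec a]; ring
  rcases m with a | j
  · have ha : Int.ofNat a = (a : ℤ) := rfl
    rcases Nat.eq_zero_or_pos a with rfl | hj
    · rw [ha]
      have z0 : Fz F ((0:ℕ):ℤ) = F 0 := rfl
      have z1 : Fz F (((0:ℕ):ℤ)+1) = F 1 := rfl
      have z2 : Fz F (((0:ℕ):ℤ)-1) = 0 := rfl
      rw [z0, z1, z2, h0, h1]; ring
    · obtain ⟨b, rfl⟩ := Nat.exists_eq_add_of_le hj
      rw [ha]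
      have e1 : ((1 + b : ℕ) : ℤ) + 1 = ((b + 2 : ℕ) : ℤ) := by push_cast; ring
      have e2 : ((1 + b : ℕ) : ℤ) - 1 = ((b : ℕ) : ℤ) := by push_cast; ring
      rw [e1, e2, Fz_natCast, Fz_natCast, Fz_natCast, Nat.add_comm 1 b, key b]
  · rcases Nat.eq_zero_or_pos j with rfl | hj
    · have e1 : Int.negSucc 0 + 1 = ((0:ℕ):ℤ) := by decide
      have e2 : Int.negSucc 0 - 1 = -((0:ℕ):ℤ) - 2 := by decide
      have z : Fz F (Int.negSucc 0) = 0 := by simp [Fz]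
      rw [e1, e2, z, Fz_natCast, Fz_negSub, h0]
      ring
    · obtain ⟨b, rfl⟩ := Nat.exists_eq_add_of_le hj
      rcases Nat.eq_zero_or_pos b with rfl | hb
      · have e0 : Int.negSucc 1 = -((0:ℕ):ℤ) - 2 := by decide
        have e1 : Int.negSucc 1 + 1 = -1 := by decide
        have e2 : Int.negSucc 1 - 1 = -((1:ℕ):ℤ) - 2 := by decide
        rw [e1, e2, e0, Fz_negSub, Fz_negSub, Fz_neg_one, h0, h1]
        ring
      · obtain ⟨c, rfl⟩ := Nat.exists_eq_add_of_le hb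
        have e0 : Int.negSucc (1 + (1 + c)) = -((c+1:ℕ):ℤ) - 2 := by
          rw [Int.negSucc_eq]; push_cast; ring
        have e1 : Int.negSucc (1 + (1 + c)) + 1 = -((c:ℕ):ℤ) - 2 := by
          rw [Int.negSucc_eq]; push_cast; ring
        have e2 : Int.negSucc (1 + (1 + c)) - 1 = -((c+2:ℕ):ℤ) - 2 := by
          rw [Int.negSucc_eq]; push_cast; ring
        rw [e1, e2, e0, Fz_negSub, Fz_negSub, Fz_negSub]
        have := key c
        rw [show c + 1 + 1 = c + 2 from rfl] at this
        linear_combination -this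

def Bc (n k : ℕ) : ℚ := (n.choose k : ℚ) - (if k = 0 then 0 else (n.choose (k - 1) : ℚ))

lemma Bc_zero (n : ℕ) : Bc n 0 = 1 := by simp [Bc]

lemma Bc_succ (n k : ℕ) : Bc (n + 1) (k + 1) = Bc n (k + 1) + Bc n k := by
  unfold Bc
  cases k with
  | zero => simp [Nat.choose_succ_succ]
  | succ j =>
      rw [if_neg (Nat.succ_ne_zero _), if_neg (Nat.succ_ne_zero _), if_neg (Nat.succ_ne_zero _)]
      simp only [Nat.succ_sub_one, Nat.choose_succ_succ n (j+1), Nat.choose_succ_succ n j]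
      push_cast
      ring

lemma Bc_big (n k : ℕ) (h : n + 1 ≤ k) : Bc n (k + 1) = 0 := by
  unfold Bc
  rw [if_neg (Nat.succ_ne_zero _), Nat.succ_sub_one,
    Nat.choose_eq_zero_of_lt (by omega), Nat.choose_eq_zero_of_lt (by omega)]
  simp

lemma two_pow (F : ℕ → Polynomial ℚ)
    (h0 : F 0 = 1) (h1 : F 1 = X)
    (hrec : ∀ n, F (n + 2) = X * F (n + 1) - F n) :
    ∀ n : ℕ, (2 : Polynomial ℚ) * X ^ n =
      ∑ k ∈ range (n + 2), Bc n k • Fz F ((n : ℤ) - 2 * k) := by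
  intro n
  induction n with
  | zero =>
      rw [Finset.sum_range_succ, Finset.sum_range_succ, Finset.sum_range_zero]
      have e0 : ((0:ℕ):ℤ) - 2 * ((0:ℕ):ℤ) = ((0:ℕ):ℤ) := by norm_num
      have e1 : ((0:ℕ):ℤ) - 2 * ((1:ℕ):ℤ) = -((0:ℕ):ℤ) - 2 := by norm_num
      rw [e0, e1, Fz_natCast, Fz_negSub, h0]
      have b0 : Bc 0 0 = 1 := Bc_zero 0
      have b1 : Bc 0 1 = -1 := by simp [Bc]
      rw [b0, b1]
      norm_num
  | succ n ih =>
      have hL : (2 : Polynomial ℚ) * X ^ (n + 1) =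
          (∑ k ∈ range (n + 2), Bc n k • Fz F ((n : ℤ) - 2 * k + 1)) +
          (∑ k ∈ range (n + 2), Bc n k • Fz F ((n : ℤ) - 2 * k - 1)) := by
        calc (2 : Polynomial ℚ) * X ^ (n + 1) = X * (2 * X ^ n) := by ring
          _ = X * ∑ k ∈ range (n + 2), Bc n k • Fz F ((n : ℤ) - 2 * k) := by rw [ih]
          _ = ∑ k ∈ range (n + 2), Bc n k • (X * Fz F ((n : ℤ) - 2 * k)) := by
              rw [Finset.mul_sum]
              exact Finset.sum_congr rfl fun k _ => (mul_smul_comm _ _ _)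
          _ = ∑ k ∈ range (n + 2),
                Bc n k • (Fz F ((n : ℤ) - 2 * k + 1) + Fz F ((n : ℤ) - 2 * k - 1)) := by
              exact Finset.sum_congr rfl fun k _ => by rw [X_mul_Fz F h0 h1 hrec]
          _ = _ := by
              simp only [smul_add, Finset.sum_add_distrib]
      have hS1 : (∑ k ∈ range (n + 2), Bc n k • Fz F ((n : ℤ) - 2 * k + 1)) =
          Fz F ((n : ℤ) + 1) +
            ∑ i ∈ range (n + 2), Bc n (i + 1) • Fz F ((n : ℤ) - 2 * i - 1) := by
        rw [Finset.sum_range_succ' _ (n + 1)]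
        rw [Finset.sum_range_succ _ (n + 1)]
        rw [Bc_big n (n + 1) le_rfl, zero_smul, add_zero]
        rw [Bc_zero, one_smul]
        have : ∀ i : ℕ, (n : ℤ) - 2 * ((i + 1 : ℕ) : ℤ) + 1 = (n : ℤ) - 2 * i - 1 := by
          intro i; push_cast; ring
        rw [Finset.sum_congr rfl fun i _ => by rw [this i]]
        have : (n : ℤ) - 2 * ((0:ℕ) : ℤ) + 1 = (n : ℤ) + 1 := by push_cast; ring
        rw [this, add_comm]
      rw [hL, hS1]
      rw [Finset.sum_range_succ' _ (n + 2)]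
      rw [Bc_zero, one_smul]
      have ec : ∀ i : ℕ, ((n + 1 : ℕ) : ℤ) - 2 * ((i + 1 : ℕ) : ℤ) = (n : ℤ) - 2 * i - 1 := by
        intro i; push_cast; ring
      have ec0 : ((n + 1 : ℕ) : ℤ) - 2 * ((0:ℕ) : ℤ) = (n : ℤ) + 1 := by push_cast; ring
      rw [ec0]
      have hRsum : ∑ i ∈ range (n + 2), Bc (n + 1) (i + 1) • Fz F (((n + 1 : ℕ) : ℤ) - 2 * ((i + 1 : ℕ) : ℤ)) =
          (∑ i ∈ range (n + 2), Bc n (i + 1) • Fz F ((n : ℤ) - 2 * i - 1)) +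
          (∑ i ∈ range (n + 2), Bc n i • Fz F ((n : ℤ) - 2 * i - 1)) := by
        rw [← Finset.sum_add_distrib]
        refine Finset.sum_congr rfl fun i _ => ?_
        rw [ec i, Bc_succ, add_smul]
      rw [hRsum]
      ring

lemma Bc_reflect (n j : ℕ) (h : j ≤ n + 1) : Bc n (n + 1 - j) = -Bc n j := by
  unfold Bc
  rcases Nat.eq_zero_or_pos j with rfl | hj
  · rw [Nat.sub_zero, if_neg (Nat.succ_ne_zero n), if_pos rfl, Nat.succ_sub_one,
      Nat.choose_eq_zero_of_lt (Nat.lt_succ_self n), Nat.choose_self]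
    norm_num
  · rcases eq_or_lt_of_le h with rfl | hlt
    · rw [Nat.sub_self, if_pos rfl, if_neg (Nat.succ_ne_zero n), Nat.choose_zero_right,
        Nat.succ_sub_one, Nat.choose_eq_zero_of_lt (Nat.lt_succ_self n), Nat.choose_self]
      norm_num
    · have hjn : j ≤ n := by omega
      have hne : n + 1 - j ≠ 0 := by omega
      rw [if_neg hne, if_neg (by omega : j ≠ 0)]
      have e2 : n + 1 - j - 1 = n - j := by omega
      have e1 : n + 1 - j = n - (j - 1) := by omega
      rw [e2, e1, Nat.choose_symm (by omega), Nat.choose_symm hjn]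
      ring

theorem pow_eq_sum_ballot_mul_fibonacci
    (F : ℕ → Polynomial ℚ)
    (h0 : F 0 = 1) (h1 : F 1 = X)
    (hrec : ∀ n, F (n + 2) = X * F (n + 1) - F n) :
    ∀ n : ℕ, (X : Polynomial ℚ) ^ n =
      ∑ k ∈ range (n / 2 + 1),
        (((n.choose k : ℚ) - (if k = 0 then 0 else (n.choose (k - 1) : ℚ)))) •
          F (n - 2 * k) := by
  intro n
  have key := two_pow F h0 h1 hrec n
  set f : ℕ → Polynomial ℚ := fun k => Bc n k • Fz F ((n : ℤ) - 2 * k) with hf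
  have hrefl : ∀ j ≤ n + 1, f (n + 1 - j) = f j := by
    intro j hj
    simp only [hf]
    have e : (n : ℤ) - 2 * ((n + 1 - j : ℕ) : ℤ) = -((n : ℤ) - 2 * j) - 2 := by
      have : ((n + 1 - j : ℕ) : ℤ) = (n : ℤ) + 1 - j := by omega
      rw [this]; ring
    rw [e, Fz_neg, Bc_reflect n j hj, neg_smul, smul_neg, neg_neg]
  have hsplit : ∑ k ∈ range (n + 2), f k =
      (∑ k ∈ range (n / 2 + 1), f k) + ∑ k ∈ Ico (n / 2 + 1) (n + 2), f k := by
    rw [Finset.range_eq_Ico,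
      ← Finset.sum_Ico_consecutive _ (by omega : 0 ≤ n / 2 + 1) (by omega : n / 2 + 1 ≤ n + 2),
      ← Finset.range_eq_Ico]
  have hmap : ∑ k ∈ Ico (n / 2 + 1) (n + 2), f k = ∑ k ∈ range (n - n / 2 + 1), f k := by
    refine Finset.sum_nbij' (fun k => n + 1 - k) (fun k => n + 1 - k) ?_ ?_ ?_ ?_ ?_
    · intro a ha
      simp only [Finset.mem_Ico] at ha
      simp only [Finset.mem_range]
      omega
    · intro a ha
      simp only [Finset.mem_range] at ha
      simp only [Finset.mem_Ico]
      omega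
    · intro a ha
      simp only [Finset.mem_Ico] at ha
      show n + 1 - (n + 1 - a) = a
      omega
    · intro a ha
      simp only [Finset.mem_range] at ha
      show n + 1 - (n + 1 - a) = a
      omega
    · intro a ha
      simp only [Finset.mem_Ico] at ha
      show f a = f (n + 1 - a)
      exact (hrefl a (by omega)).symm
  have hdup : ∑ k ∈ range (n - n / 2 + 1), f k = ∑ k ∈ range (n / 2 + 1), f k := by
    rcases Nat.even_or_odd n with he | ho
    · have : n - n / 2 = n / 2 := by
        obtain ⟨m, rfl⟩ := he
        omega
      rw [this]
    · obtain ⟨m, rfl⟩ := ho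
      have : 2 * m + 1 - (2 * m + 1) / 2 = (2 * m + 1) / 2 + 1 := by omega
      rw [this, Finset.sum_range_succ]
      have hb : Bc (2 * m + 1) ((2 * m + 1) / 2 + 1) = 0 := by
        unfold Bc
        rw [if_neg (Nat.succ_ne_zero _), Nat.succ_sub_one]
        have e2 : (2 * m + 1) / 2 + 1 = 2 * m + 1 - (2 * m + 1) / 2 := by omega
        rw [e2, Nat.choose_symm (by omega)]
        ring
      have hzero : f ((2 * m + 1) / 2 + 1) = 0 := by
        simp only [hf, hb, zero_smul]
      rw [hzero, add_zero]
  have h2 : (2 : Polynomial ℚ) * X ^ n = 2 * ∑ k ∈ range (n / 2 + 1), f k := by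
    rw [key, hsplit, hmap, hdup]; ring
  have hX : (X : Polynomial ℚ) ^ n = ∑ k ∈ range (n / 2 + 1), f k :=
    mul_left_cancel₀ (by norm_num : (2 : Polynomial ℚ) ≠ 0) h2
  rw [hX]
  refine Finset.sum_congr rfl fun k hk => ?_
  simp only [hf]
  have hk' : 2 * k ≤ n := by
    have := Finset.mem_range.mp hk
    omega
  have e : (n : ℤ) - 2 * (k : ℤ) = ((n - 2 * k : ℕ) : ℤ) := by omega
  rw [e, Fz_natCast]
  rfl
end

section
/- The polynomials Q_n(x,t) defined by Q_0 = 1, Q_1 = x-1-t, Q_n = (x-1-t)Q_{n-1} - t Q_{n-2} satisfy Q_n(x,t) = ∑_{k=0}^n (-1)^{n-k} q_{n,k}(t) x^k, where q_{n,k}(t) = ∑_{j=0}^{n-k} C(n-j,k) C(k+j,j) t^j. -/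
open Finset Polynomial

noncomputable def qp (n k : ℕ) : Polynomial ℚ :=
  ∑ j ∈ range (n - k + 1),
    (((n - j).choose k * (k + j).choose j : ℚ)) • Polynomial.X ^ j

lemma qp_coeff (n k i : ℕ) :
    (qp n k).coeff i =
      if i + k ≤ n then ((n - i).choose k * (k + i).choose i : ℚ) else 0 := by
  unfold qp
  rw [Polynomial.finset_sum_coeff]
  simp only [Polynomial.coeff_smul, Polynomial.coeff_X_pow, smul_eq_mul, mul_ite, mul_one,
    mul_zero]
  rw [Finset.sum_ite_eq (range (n - k + 1)) i]
  by_cases h : i + k ≤ n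
  · rw [if_pos (by simp; omega), if_pos h]
  · rw [if_neg h]
    split_ifs with h2
    · simp only [Finset.mem_range] at h2
      have hk : n < k := by omega
      have hi : i = 0 := by omega
      subst hi
      simp [Nat.choose_eq_zero_of_lt hk]
    · rfl

lemma qp_eq_zero {n k : ℕ} (h : n < k) : qp n k = 0 := by
  ext i
  rw [qp_coeff]
  rw [if_neg (by omega)]
  simp

lemma key_nat (m k i : ℕ) :
    (m+1).choose (k+1) * (k+i+2).choose (i+1) + m.choose (k+1) * (k+i+1).choose i
      = m.choose k * (k+i+1).choose (i+1) + m.choose (k+1) * (k+i+2).choose (i+1)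
        + (m+1).choose (k+1) * (k+i+1).choose i := by
  have h1 : (m+1).choose (k+1) = m.choose k + m.choose (k+1) := Nat.choose_succ_succ m k
  have h2 : (k+i+2).choose (i+1) = (k+i+1).choose i + (k+i+1).choose (i+1) :=
    Nat.choose_succ_succ (k+i+1) i
  rw [h1, h2]; ring

lemma qrec0 (n : ℕ) :
    qp (n+2) 0 = (1 + Polynomial.X) * qp (n+1) 0 - Polynomial.X * qp n 0 := by
  ext j
  rw [Polynomial.coeff_sub, add_mul, one_mul, Polynomial.coeff_add]
  cases j with
  | zero =>
    simp [qp_coeff, Polynomial.mul_coeff_zero]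
  | succ j =>
    rw [Polynomial.coeff_X_mul, Polynomial.coeff_X_mul]
    simp only [qp_coeff, Nat.add_zero, Nat.choose_zero_right, Nat.choose_self, Nat.cast_one,
      mul_one, one_mul, Nat.cast_ofNat]
    split_ifs <;> norm_num <;> omega

lemma qrecS (n k : ℕ) :
    qp (n+2) (k+1) = qp (n+1) k + (1 + Polynomial.X) * qp (n+1) (k+1)
      - Polynomial.X * qp n (k+1) := by
  ext j
  rw [Polynomial.coeff_sub, Polynomial.coeff_add, add_mul, one_mul, Polynomial.coeff_add]
  cases j with
  | zero =>
    rw [Polynomial.mul_coeff_zero, Polynomial.mul_coeff_zero]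
    simp only [Polynomial.coeff_X_zero, zero_mul, sub_zero, add_zero]
    simp only [qp_coeff, Nat.add_zero, Nat.zero_add, Nat.sub_zero, Nat.choose_zero_right,
      Nat.cast_one, mul_one]
    have hp : (n+2).choose (k+1) = (n+1).choose k + (n+1).choose (k+1) :=
      Nat.choose_succ_succ (n+1) k
    split_ifs <;>
      first
        | omega
        | (rw [hp]; push_cast; ring1)
        | (have hz : (n+1).choose (k+1) = 0 := Nat.choose_eq_zero_of_lt (by omega)
           rw [hp, hz]; push_cast; ring1)
        | (have hz : (n+2).choose (k+1) = 0 := Nat.choose_eq_zero_of_lt (by omega)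
           simp [hz])
  | succ j =>
    rw [Polynomial.coeff_X_mul, Polynomial.coeff_X_mul]
    simp only [qp_coeff]
    rcases le_or_gt (j + k + 1) n with hB | hB
    · -- all four conditions hold
      have e1 : n + 2 - (j+1) = (n - j) + 1 := by omega
      have e2 : n + 1 - (j+1) = n - j := by omega
      have e3 : n + 1 - j = (n - j) + 1 := by omega
      rw [if_pos (by omega), if_pos (by omega), if_pos (by omega), if_pos (by omega),
        if_pos (by omega), e1, e2, e3]
      have H := key_nat (n - j) k j
      have e4 : k + 1 + (j + 1) = k + j + 2 := by ring
      have e5 : k + (j+1) = k + j + 1 := by ring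
      have e6 : k + 1 + j = k + j + 1 := by ring
      rw [e4, e5, e6]
      have H' := congrArg (Nat.cast (R := ℚ)) H
      push_cast at H' ⊢
      linarith
    · rcases le_or_gt (j + k) n with hA | hA
      · -- j + k = n exactly
        have hjk : j + k = n := by omega
        have e1 : n + 2 - (j+1) = k + 1 := by omega
        have e2 : n + 1 - (j+1) = k := by omega
        have e3 : n + 1 - j = k + 1 := by omega
        rw [if_pos (by omega), if_pos (by omega), if_neg (by omega), if_pos (by omega),
          if_neg (by omega), e1, e2, e3]
        have H := key_nat k k j
        rw [Nat.choose_succ_self] at H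
        have e4 : k + 1 + (j + 1) = k + j + 2 := by ring
        have e5 : k + (j+1) = k + j + 1 := by ring
        have e6 : k + 1 + j = k + j + 1 := by ring
        rw [e4, e5, e6]
        have H' := congrArg (Nat.cast (R := ℚ)) H
        push_cast at H' ⊢
        linarith
      · rw [if_neg (by omega), if_neg (by omega), if_neg (by omega), if_neg (by omega),
          if_neg (by omega)]
        ring

noncomputable def S (n : ℕ) : Polynomial (Polynomial ℚ) :=
  ∑ k ∈ range (n + 1),
    ((-1 : Polynomial (Polynomial ℚ)) ^ (n - k)) * C (qp n k) * X ^ k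

lemma S_coeff (n k : ℕ) : (S n).coeff k = (-1 : Polynomial ℚ) ^ (n + k) * qp n k := by
  unfold S
  rw [Polynomial.finset_sum_coeff]
  have h : ∀ k' ∈ range (n + 1),
      (((-1 : Polynomial (Polynomial ℚ)) ^ (n - k')) * C (qp n k') * X ^ k').coeff k
        = if k = k' then (-1 : Polynomial ℚ) ^ (n + k') * qp n k' else 0 := by
    intro k' hk'
    simp only [Finset.mem_range] at hk'
    have hsign : ((-1 : Polynomial (Polynomial ℚ)) ^ (n - k'))
        = C ((-1 : Polynomial ℚ) ^ (n + k')) := by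
      rw [map_pow, map_neg, map_one]
      rw [show n + k' = (n - k') + 2 * k' by omega, pow_add, pow_mul]
      norm_num
    rw [hsign, ← map_mul, Polynomial.coeff_C_mul, Polynomial.coeff_X_pow]
    simp only [mul_ite, mul_one, mul_zero]
  rw [Finset.sum_congr rfl h, Finset.sum_ite_eq]
  by_cases hk : k ∈ range (n + 1)
  · rw [if_pos hk]
  · rw [if_neg hk, qp_eq_zero (by simp at hk; omega), mul_zero]

lemma Srec (n : ℕ) :
    S (n + 2) = (X - C (1 + Polynomial.X)) * S (n + 1) - C Polynomial.X * S n := by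
  apply Polynomial.ext; intro k
  rw [sub_mul, Polynomial.coeff_sub, Polynomial.coeff_sub, Polynomial.coeff_C_mul,
    Polynomial.coeff_C_mul]
  cases k with
  | zero =>
    rw [Polynomial.mul_coeff_zero]
    simp only [Polynomial.coeff_X_zero, zero_mul, S_coeff]
    have h := qrec0 n
    linear_combination ((-1 : Polynomial ℚ) ^ n) * h
  | succ k =>
    rw [Polynomial.coeff_X_mul]
    simp only [S_coeff]
    have h := qrecS n k
    linear_combination ((-1 : Polynomial ℚ) ^ (n + k + 1)) * h

lemma S0 : S 0 = 1 := by
  simp [S, qp]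

lemma S1 : S 1 = X - C (1 + Polynomial.X) := by
  rw [S, Finset.sum_range_succ, Finset.sum_range_one]
  simp [qp, Finset.sum_range_succ, map_add]
  ring

/-- Polynomials in `x` with coefficients polynomials in `t`:
outer variable `X` is `x`, inner variable is `t`. -/
theorem Q_polynomials_explicit
    (Q : ℕ → Polynomial (Polynomial ℚ))
    (h0 : Q 0 = 1)
    (h1 : Q 1 = X - C (1 + Polynomial.X))
    (hrec : ∀ n, Q (n + 2) =
      (X - C (1 + Polynomial.X)) * Q (n + 1) - C Polynomial.X * Q n) :
    ∀ n, Q n = ∑ k ∈ range (n + 1),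
      ((-1 : Polynomial (Polynomial ℚ)) ^ (n - k)) *
        C (∑ j ∈ range (n - k + 1),
            (((n - j).choose k * (k + j).choose j : ℚ)) • Polynomial.X ^ j) *
        X ^ k := by
  have main : ∀ n, Q n = S n := by
    intro n
    induction n using Nat.twoStepInduction with
    | zero => rw [h0, S0]
    | one => rw [h1, S1]
    | more n ih1 ih2 => rw [hrec n, ih2, ih1, Srec]
  intro n
  rw [main n]
  rfl
end

section
/- The coefficients B_{n,k}(t) defined by the recursion B_{n,k} = B_{n-1,k-1} + (1+t)B_{n-1,k} + t B_{n-1,k+1}, with B_{0,k} = [k=0] and B_{n,-1} = 0, are given explicitly by B_{n,k}(t) = ∑_{j} ((k+1)/(n+1)) C(n+1, k+1+j) C(n+1, j) t^j. -/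
open Finset Polynomial
noncomputable def aa (n k j : ℕ) : ℚ :=
  ((k + 1 : ℚ) / (n + 1)) * ((n + 1).choose (k + 1 + j)) * ((n + 1).choose j)

lemma chooseq (n k : ℕ) : ((n.choose (k+1) : ℚ)) * (k+1) = (n.choose k) * ((n : ℚ) - k) := by
  rcases le_or_gt (k+1) n with h | h
  · have := Nat.choose_succ_right_eq n k
    calc ((n.choose (k+1) : ℚ)) * (k+1) = ((n.choose (k+1) * (k+1) : ℕ) : ℚ) := by push_cast; ring
      _ = ((n.choose k * (n - k) : ℕ) : ℚ) := by rw [this]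
      _ = (n.choose k) * ((n : ℚ) - k) := by
          push_cast [Nat.cast_sub (le_of_lt (Nat.lt_of_succ_le h))]; ring
  · rcases le_or_gt k n with h2 | h2
    · have hk : k = n := by omega
      subst hk
      simp [Nat.choose_eq_zero_of_lt h]
    · simp [Nat.choose_eq_zero_of_lt h, Nat.choose_eq_zero_of_lt h2]

lemma key (n j : ℕ) (κ A A' B' B'' : ℚ)
    (hA : A' * (κ + 2 + j) = A * ((n : ℚ) - κ - j))
    (hB : B' * j = B'' * ((n : ℚ) + 2 - j)) :
    ((n:ℚ)+1)*(κ+2)*(A'+A)*(B'+B'') =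
      ((n:ℚ)+2)*((κ+1)*A*B' + (κ+2)*A'*B' + (κ+2)*A*B'' + (κ+3)*A'*B'') := by
  linear_combination (-(B' + B'')) * hA + (A + A') * hB

lemma aa_rec (n k m : ℕ) :
    aa (n+1) (k+1) (m+1) = aa n k (m+1) + aa n (k+1) (m+1) + aa n (k+1) m + aa n (k+2) m := by
  unfold aa
  simp only [show k+1+1+(m+1) = (k+m+2)+1 from by omega, show k+1+(m+1) = k+m+2 from by omega,
    show k+1+1+m = k+m+2 from by omega, show k+2+1+m = (k+m+2)+1 from by omega]
  set A : ℚ := ((n+1).choose (k+m+2) : ℚ) with hAdef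
  set A' : ℚ := ((n+1).choose (k+m+3) : ℚ) with hA'def
  set B' : ℚ := ((n+1).choose (m+1) : ℚ) with hB'def
  set B'' : ℚ := ((n+1).choose m : ℚ) with hB''def
  have hA : A' * ((k:ℚ) + 2 + (m+1)) = A * ((n : ℚ) - k - (m+1)) := by
    have := chooseq (n+1) (k+m+2)
    rw [show k+m+2+1 = k+m+3 from by omega] at this
    rw [← hAdef, ← hA'def] at this
    push_cast at this
    linear_combination this
  have hB : B' * ((m:ℚ)+1) = B'' * ((n : ℚ) + 2 - (m+1)) := by
    have := chooseq (n+1) m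
    rw [← hB'def, ← hB''def] at this
    push_cast at this
    linear_combination this
  have hkey := key n (m+1) (k : ℚ) A A' B' B'' (by push_cast; linear_combination hA)
      (by push_cast; linear_combination hB)
  have p1 : ((n+1+1).choose ((k+m+2)+1) : ℚ) = A' + A := by
    rw [Nat.choose_succ_succ (n+1) (k+m+2)]
    push_cast [Nat.succ_eq_add_one, show k+m+2+1 = k+m+3 from by omega, ← hAdef, ← hA'def]; ring
  have p2 : ((n+1+1).choose (m+1) : ℚ) = B' + B'' := by
    rw [Nat.choose_succ_succ (n+1) m]
    push_cast [Nat.succ_eq_add_one, ← hB'def, ← hB''def]; ring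
  rw [p1, p2]
  have h1 : (n:ℚ) + 1 ≠ 0 := by positivity
  have h2 : (n:ℚ) + 1 + 1 ≠ 0 := by positivity
  push_cast
  field_simp
  push_cast at hkey
  ring_nf
  ring_nf at hkey
  linarith [hkey]

lemma aa_rec0 (n k : ℕ) : aa (n+1) (k+1) 0 = aa n k 0 + aa n (k+1) 0 := by
  unfold aa
  simp only [show k+1+1+0 = (k+1)+1 from by omega, show k+1+0 = k+1 from by omega,
    show k+2+0 = (k+1)+1 from by omega, Nat.choose_zero_right]
  have hc := chooseq (n+1) (k+1)
  have p1 : ((n+1+1).choose (k+1+1) : ℚ) = (n+1).choose (k+1) + (n+1).choose (k+1+1) := by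
    rw [Nat.choose_succ_succ (n+1) (k+1)]
    push_cast [Nat.succ_eq_add_one]; ring
  rw [p1]
  have h1 : (n:ℚ) + 1 ≠ 0 := by positivity
  have h2 : (n:ℚ) + 1 + 1 ≠ 0 := by positivity
  push_cast at hc ⊢
  field_simp
  ring_nf
  ring_nf at hc
  linarith [hc]

lemma aa_bd (n m : ℕ) :
    aa (n+1) 0 (m+1) = aa n 0 (m+1) + aa n 0 m + aa n 1 m := by
  unfold aa
  simp only [show 0+1+(m+1) = (m+1)+1 from by omega, show 0+1+m = m+1 from by omega,
    show 1+1+m = (m+1)+1 from by omega]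
  set A : ℚ := ((n+1).choose (m+1) : ℚ) with hAdef
  set A' : ℚ := ((n+1).choose (m+1+1) : ℚ) with hA'def
  set B'' : ℚ := ((n+1).choose m : ℚ) with hB''def
  have hA : A' * ((-1:ℚ) + 2 + (m+1)) = A * ((n : ℚ) - (-1) - (m+1)) := by
    have := chooseq (n+1) (m+1)
    rw [← hAdef, ← hA'def] at this
    push_cast at this
    linear_combination this
  have hB : A * ((m:ℚ)+1) = B'' * ((n : ℚ) + 2 - (m+1)) := by
    have := chooseq (n+1) m
    rw [← hAdef, ← hB''def] at this
    push_cast at this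
    linear_combination this
  have hkey := key n (m+1) (-1 : ℚ) A A' A B'' (by push_cast; linear_combination hA)
      (by push_cast; linear_combination hB)
  have p1 : ((n+1+1).choose (m+1+1) : ℚ) = A' + A := by
    rw [Nat.choose_succ_succ (n+1) (m+1)]
    push_cast [Nat.succ_eq_add_one, ← hAdef, ← hA'def]; ring
  have p2 : ((n+1+1).choose (m+1) : ℚ) = A + B'' := by
    rw [Nat.choose_succ_succ (n+1) m]
    push_cast [Nat.succ_eq_add_one, ← hAdef, ← hB''def]; ring
  rw [p1, p2]
  have h1 : (n:ℚ) + 1 ≠ 0 := by positivity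
  have h2 : (n:ℚ) + 1 + 1 ≠ 0 := by positivity
  push_cast
  field_simp
  push_cast at hkey
  ring_nf
  ring_nf at hkey
  linarith [hkey]

lemma aa_bd0 (n : ℕ) : aa (n+1) 0 0 = aa n 0 0 := by
  unfold aa
  simp only [show 0+1+0 = 1 from rfl, Nat.choose_zero_right, Nat.choose_one_right]
  have h1 : (n:ℚ) + 1 ≠ 0 := by positivity
  have h2 : (n:ℚ) + 1 + 1 ≠ 0 := by positivity
  push_cast
  field_simp

lemma aa_vanish (n k i : ℕ) (h : n + 1 ≤ i) : aa n k i = 0 := by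
  unfold aa
  rcases eq_or_lt_of_le h with h' | h'
  · rw [Nat.choose_eq_zero_of_lt (show n+1 < k+1+i by omega)]
    ring
  · rw [Nat.choose_eq_zero_of_lt (show n+1 < i by omega)]
    ring

lemma coeff_E (n k i : ℕ) :
    (∑ j ∈ range (n+1), aa n k j • (X : Polynomial ℚ)^j).coeff i = aa n k i := by
  rw [Polynomial.finset_sum_coeff]
  simp only [Polynomial.coeff_smul, Polynomial.coeff_X_pow, smul_eq_mul, mul_ite, mul_one, mul_zero]
  rw [Finset.sum_ite_eq (range (n+1)) i (fun j => aa n k j)]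
  split
  · rfl
  · rename_i hmem
    exact (aa_vanish n k i (by simpa using hmem)).symm

theorem B_nk_explicit
    (B : ℕ → ℕ → Polynomial ℚ)
    (h0 : ∀ k, B 0 k = if k = 0 then 1 else 0)
    (hrec : ∀ n k, B (n + 1) (k + 1) =
      B n k + (1 + X) * B n (k + 1) + X * B n (k + 2))
    (hbd : ∀ n, B (n + 1) 0 = (1 + X) * B n 0 + X * B n 1) :
    ∀ n k, B n k = ∑ j ∈ range (n + 1),
      (((k + 1 : ℚ) / (n + 1)) * ((n + 1).choose (k + 1 + j)) * ((n + 1).choose j)) •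
        X ^ j := by
  have main : ∀ n k, B n k = ∑ j ∈ range (n + 1), aa n k j • (X : Polynomial ℚ)^j := by
    intro n
    induction n with
    | zero =>
      intro k
      rw [h0, Finset.sum_range_one]
      rcases k with _ | k
      · norm_num [aa]
      · rw [if_neg (by omega)]
        unfold aa
        rw [Nat.choose_eq_zero_of_lt (show 1 < k+1+1+0 by omega)]
        simp
    | succ n ih =>
      intro k
      have hXmul : ∀ (p : Polynomial ℚ) (i : ℕ), (X * p).coeff i =
          if h : i = 0 then 0 else p.coeff (i - 1) := by
        intro p i
        rcases i with _ | m
        · simp [Polynomial.mul_coeff_zero]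
        · simp [Polynomial.coeff_X_mul]
      rcases k with _ | k
      · rw [hbd n, ih 0, ih 1]
        ext i
        rw [coeff_E]
        rw [show ((1 : Polynomial ℚ) + X) * (∑ j ∈ range (n+1), aa n 0 j • (X:Polynomial ℚ)^j)
            = (∑ j ∈ range (n+1), aa n 0 j • (X:Polynomial ℚ)^j)
              + X * (∑ j ∈ range (n+1), aa n 0 j • (X:Polynomial ℚ)^j) from by ring]
        simp only [Polynomial.coeff_add, hXmul, coeff_E]
        rcases i with _ | m
        · simp [aa_bd0 n]
        · simp only [Nat.succ_ne_zero, dif_neg, Nat.add_sub_cancel, not_false_iff]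
          rw [aa_bd n m]
      · rw [hrec n k, ih k, ih (k+1), ih (k+2)]
        ext i
        rw [coeff_E]
        rw [show ((1 : Polynomial ℚ) + X) * (∑ j ∈ range (n+1), aa n (k+1) j • (X:Polynomial ℚ)^j)
            = (∑ j ∈ range (n+1), aa n (k+1) j • (X:Polynomial ℚ)^j)
              + X * (∑ j ∈ range (n+1), aa n (k+1) j • (X:Polynomial ℚ)^j) from by ring]
        simp only [Polynomial.coeff_add, hXmul, coeff_E]
        rcases i with _ | m
        · simp [aa_rec0 n k]
        · simp only [Nat.succ_ne_zero, dif_neg, Nat.add_sub_cancel, not_false_iff]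
          rw [aa_rec n k m]
          ring
  intro n k
  exact main n k
end

section
/- With B_{n,k}(t) defined by B_{n,k} = B_{n-1,k-1} + (1+t)B_{n-1,k} + tB_{n-1,k+1}, B_{0,k} = [k=0], B_{n,-1} = 0, one has ∑_{k=0}^n B_{n,k}(t) (1 + t + ... + t^k) = (2t+2)^n. -/
open Finset Polynomial

/-!
Row `n + 1` of `B` is the image of row `n` under the tridiagonal operator `T` with
subdiagonal `1`, diagonal `1 + t` and superdiagonal `t`, and the sum is the pairing of row `n`
with `G k = 1 + t + ⋯ + t ^ k`. Moving `T` across the pairing turns it into its transpose, of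
which `G` is an eigenvector with eigenvalue `2t + 2`, because
`G (k + 1) - G k = t (G k - G (k - 1))` (with `G (-1) = 0`).
-/

variable {R : Type*}

/-- The tridiagonal matrix with subdiagonal `a`, diagonal `b`, superdiagonal `c` acting on
`ℕ`-indexed columns. -/
def tridiag [Semiring R] (a b c : R) (f : ℕ → R) : ℕ → R
  | 0 => b * f 0 + c * f 1
  | k + 1 => a * f k + b * f (k + 1) + c * f (k + 2)

theorem tridiag_eq_zero_of_lt [Semiring R] {a b c : R} {f : ℕ → R} {n : ℕ}
    (hf : ∀ k, n < k → f k = 0) : ∀ k, n + 1 < k → tridiag a b c f k = 0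
  | 0, h => absurd h (by omega)
  | k + 1, h => by
    simp [tridiag, hf k (by omega), hf (k + 1) (by omega), hf (k + 2) (by omega)]

theorem sum_tridiag_mul_eq_sum_mul_tridiag [CommRing R] (a b c : R) {f : ℕ → R} (g : ℕ → R)
    {N : ℕ} (hN : f N = 0) (hN' : f (N + 1) = 0) :
    ∑ k ∈ range (N + 1), tridiag a b c f k * g k =
      ∑ k ∈ range (N + 1), f k * tridiag c b a g k := by
  have shift_up := (sum_range_succ' (fun k => f k * g (k + 1)) N).symm.trans
    (sum_range_succ (fun k => f k * g (k + 1)) N)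
  have shift_down := (sum_range_succ' (fun k => f (k + 1) * g k) N).symm.trans
    (sum_range_succ (fun k => f (k + 1) * g k) N)
  simp only [hN, hN', zero_mul, add_zero, zero_add, add_assoc, Nat.reduceAdd]
    at shift_up shift_down
  rw [sum_range_succ', sum_range_succ']
  simp only [tridiag, add_mul, mul_add, sum_add_distrib, mul_assoc, ← mul_sum]
  simp only [mul_left_comm (f _), ← mul_sum]
  linear_combination c * shift_down - a * shift_up

theorem tridiag_geom_sum [CommSemiring R] (x : R) (k : ℕ) :
    tridiag x (1 + x) 1 (fun k => ∑ i ∈ range (k + 1), x ^ i) k =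
      (2 * x + 2) * ∑ i ∈ range (k + 1), x ^ i := by
  cases k with
  | zero => simp [tridiag, sum_range_succ]; ring
  | succ k =>
    simp only [tridiag, sum_range_succ _ (k + 2), sum_range_succ _ (k + 1)]
    ring

theorem B_weighted_row_sum
    (B : ℕ → ℕ → Polynomial ℚ)
    (h0 : ∀ k, B 0 k = if k = 0 then 1 else 0)
    (hrec : ∀ n k, B (n + 1) (k + 1) =
      B n k + (1 + X) * B n (k + 1) + X * B n (k + 2))
    (hbd : ∀ n, B (n + 1) 0 = (1 + X) * B n 0 + X * B n 1) :
    ∀ n, ∑ k ∈ range (n + 1), B n k * (∑ i ∈ range (k + 1), X ^ i) =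
      (2 * X + 2) ^ n := by
  have hstep : ∀ n, B (n + 1) = tridiag 1 (1 + X) X (B n) := fun n => funext fun k => by
    cases k <;> simp [tridiag, hrec, hbd]
  have hvanish : ∀ n k, n < k → B n k = 0 := by
    intro n
    induction n with
    | zero => intro k hk; simp [h0, hk.ne']
    | succ n ih => rw [hstep]; exact tridiag_eq_zero_of_lt ih
  intro n
  induction n with
  | zero => simp [h0]
  | succ n ih =>
    rw [hstep, sum_tridiag_mul_eq_sum_mul_tridiag _ _ _ (fun k => ∑ i ∈ range (k + 1), X ^ i)
      (hvanish n (n + 1) (by omega)) (hvanish n (n + 2) (by omega))]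
    simp only [tridiag_geom_sum, mul_left_comm (B n _), ← mul_sum]
    rw [sum_range_succ, hvanish n (n + 1) (by omega), zero_mul, add_zero, ih, pow_succ']
end

section
/- The Narayana polynomials satisfy the gamma-expansion C_{n+1}(t) = ∑_{i=0}^{⌊n/2⌋} C_i C(n,2i) t^i (1+t)^{n-2i}, where C_i is the i-th Catalan number. -/
/-!
Compare coefficients of `t^m`. The `i`-th gamma term contributes `C_i C(n,2i) C(n-2i,m-i)`,
which equals `n! / (i! (i+1)! (m-i)! (n-m-i)!)` and hence also
`C(n,m)/(m+1) · C(m+1,i+1) C(n-m,i)`; summing over `i` by Vandermonde's identity gives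
`C(n,m) C(n+1,m)/(m+1)`, the `t^m`-coefficient of the Narayana polynomial.
-/

open Finset Polynomial

namespace Nat

theorem choose_mul_choose_sub_comm (n a b : ℕ) :
    n.choose a * (n - a).choose b = n.choose b * (n - b).choose a := by
  have ha := choose_mul (n := n) (k := a + b) (le_add_right a b)
  have hb := choose_mul (n := n) (k := a + b) (le_add_left b a)
  rw [Nat.add_sub_cancel_left] at ha
  rw [Nat.add_sub_cancel] at hb
  rw [← ha, ← hb, choose_symm_add]

theorem centralBinom_mul_choose_mul_choose {n m i : ℕ} (him : i ≤ m) :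
    (2 * i).choose i * n.choose (2 * i) * (n - 2 * i).choose (m - i) =
      n.choose m * m.choose i * (n - m).choose i := by
  have hleft : n.choose (2 * i) * (2 * i).choose i = n.choose i * (n - i).choose i := by
    rw [choose_mul (by omega), two_mul, Nat.add_sub_cancel]
  have hright : n.choose m * m.choose i = n.choose i * (n - i).choose (m - i) :=
    choose_mul him
  have hmiddle := choose_mul_choose_sub_comm (n - i) i (m - i)
  rw [show n - i - i = n - 2 * i by omega, show n - i - (m - i) = n - m by omega] at hmiddle
  rw [hright, mul_comm ((2 * i).choose i), hleft, mul_assoc, hmiddle, mul_assoc]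

theorem succ_mul_catalan_mul_choose_mul_choose {n m i : ℕ} (him : i ≤ m) :
    (m + 1) * (catalan i * n.choose (2 * i) * (n - 2 * i).choose (m - i)) =
      n.choose m * ((m + 1).choose (i + 1) * (n - m).choose i) := by
  refine Nat.eq_of_mul_eq_mul_left i.succ_pos ?_
  calc (i + 1) * ((m + 1) * (catalan i * n.choose (2 * i) * (n - 2 * i).choose (m - i)))
      = (m + 1) * ((i + 1) * catalan i * n.choose (2 * i) * (n - 2 * i).choose (m - i)) := by
        ring
    _ = (m + 1) * (n.choose m * m.choose i * (n - m).choose i) := by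
        rw [succ_mul_catalan_eq_centralBinom, centralBinom_eq_two_mul_choose,
          centralBinom_mul_choose_mul_choose him]
    _ = n.choose m * (((m + 1) * m.choose i) * (n - m).choose i) := by ring
    _ = (i + 1) * (n.choose m * ((m + 1).choose (i + 1) * (n - m).choose i)) := by
        rw [add_one_mul_choose_eq]
        ring

theorem sum_range_choose_succ_mul_choose {m k r : ℕ} (hr : min m k < r) :
    ∑ i ∈ range r, (m + 1).choose (i + 1) * k.choose i = (k + (m + 1)).choose m := by
  have hvanish : ∀ i ≥ min m k + 1, (m + 1).choose (i + 1) * k.choose i = 0 := by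
    intro i hi
    rcases le_or_gt i m with him | hmi
    · rw [choose_eq_zero_of_lt (by omega : k < i), mul_zero]
    · rw [choose_eq_zero_of_lt (by omega : m + 1 < i + 1), zero_mul]
  rw [eventually_constant_sum hvanish hr,
    ← eventually_constant_sum hvanish (by omega : min m k + 1 ≤ m + 1),
    add_choose_eq, Finset.Nat.sum_antidiagonal_eq_sum_range_succ_mk]
  refine sum_congr rfl fun i hi => ?_
  have him : i ≤ m := mem_range_succ_iff.mp hi
  rw [mul_comm, choose_symm_of_eq_add (by omega : m + 1 = (m - i) + (i + 1))]

end Nat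

theorem catalan_mul_choose_mul_coeff_eq (n m i : ℕ) :
    (if i ≤ m then (catalan i : ℚ) * n.choose (2 * i) * (n - 2 * i).choose (m - i) else 0) =
      n.choose m / (m + 1) * ((m + 1).choose (i + 1) * (n - m).choose i) := by
  split_ifs with him
  · rw [div_mul_eq_mul_div, eq_div_iff (by positivity), mul_comm]
    exact_mod_cast Nat.succ_mul_catalan_mul_choose_mul_choose him
  · rw [Nat.choose_eq_zero_of_lt (by omega : m + 1 < i + 1)]
    simp

theorem narayana_gamma_expansion (n : ℕ) :
    (∑ k ∈ range (n + 1), ((n.choose k * (n + 1).choose k : ℚ) / (k + 1)) • (X : Polynomial ℚ) ^ k) =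
      ∑ i ∈ range (n / 2 + 1),
        ((catalan i : ℚ) * (n.choose (2 * i))) • ((X : Polynomial ℚ) ^ i * (1 + X) ^ (n - 2 * i)) := by
  ext m
  simp only [finsetSum_coeff, coeff_smul, coeff_X_pow, coeff_X_pow_mul', coeff_one_add_X_pow,
    smul_eq_mul, mul_ite, mul_one, mul_zero, sum_ite_eq, mem_range,
    catalan_mul_choose_mul_coeff_eq, ← mul_sum]
  rcases lt_or_ge m (n + 1) with hmn | hnm
  · rw [if_pos hmn]
    have hsum := Nat.sum_range_choose_succ_mul_choose (m := m) (k := n - m) (r := n / 2 + 1)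
      (by omega)
    rw [show n - m + (m + 1) = n + 1 by omega] at hsum
    rw [← hsum]
    push_cast
    ring
  · rw [if_neg (by omega), Nat.choose_eq_zero_of_lt (by omega : n < m)]
    simp
end

section
/- The generating function C(t,z) = ∑_{n≥0} C_n(t) z^n of Narayana polynomials satisfies the functional equation t z C(t,z)^2 = C(t,z) - 1 - z C(t,z) + t z C(t,z), as formal power series in z over the polynomial ring in t. -/
open Finset PowerSeries

/-- Narayana polynomial `C_n(t)` as a polynomial in `t`. -/
noncomputable def narayanaPoly (n : ℕ) : Polynomial ℚ :=
  if n = 0 then 1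
  else ∑ k ∈ range n,
    (((n - 1).choose k * n.choose k : ℚ) / (k + 1)) • Polynomial.X ^ k

/-!
Put `s = 1 - t`. Expanding `t ^ k = t ^ k (t + s) ^ (n - k)` and summing the coefficients with
Vandermonde's identity gives `C_n(t) = ∑_{a + b = n} Cat_a * C(2a + b, 2a) * t ^ a * s ^ b`.
For independent `t` and `s` the generating function of the right-hand side satisfies
`C = 1 + s z C + t z C²`: comparing coefficients of `t ^ (a + 1) s ^ b`, this is Pascal's rule
together with the Catalan recurrence and the convolution
`∑_{i + j = n} C(p + i, p) C(q + j, q) = C(p + q + 1 + n, p + q + 1)`, i.e. the identity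
`(1 - y)^-(p+1) (1 - y)^-(q+1) = (1 - y)^-(p+q+2)`.
Setting `s = 1 - t` turns `C = 1 + s z C + t z C²` into the claimed equation.
-/

theorem sum_antidiagonal_sum_antidiagonal_assoc {M : Type*} [AddCommMonoid M] (n : ℕ)
    (f : ℕ → ℕ → ℕ → M) :
    ∑ kl ∈ antidiagonal n, ∑ ib ∈ antidiagonal kl.2, f kl.1 ib.1 ib.2 =
      ∑ jb ∈ antidiagonal n, ∑ ki ∈ antidiagonal jb.1, f ki.1 ki.2 jb.2 := by
  rw [sum_sigma', sum_sigma']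
  refine sum_nbij' (fun u => ⟨(u.1.1 + u.2.1, u.2.2), (u.1.1, u.2.1)⟩)
    (fun u => ⟨(u.2.1, u.2.2 + u.1.2), (u.2.2, u.1.2)⟩) ?_ ?_ ?_ ?_ ?_ <;>
  rintro ⟨⟨a, b⟩, ⟨c, d⟩⟩ <;> simp +contextual [HasAntidiagonal.mem_antidiagonal] <;> omega

theorem sum_antidiagonal_sum_antidiagonal_transpose {M : Type*} [AddCommMonoid M] (m : ℕ)
    (f : ℕ × ℕ → ℕ × ℕ → M) :
    ∑ ij ∈ antidiagonal m, ∑ p ∈ antidiagonal ij.1, ∑ q ∈ antidiagonal ij.2, f p q =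
      ∑ ab ∈ antidiagonal m, ∑ x ∈ antidiagonal ab.1, ∑ y ∈ antidiagonal ab.2,
        f (x.1, y.1) (x.2, y.2) := by
  simp_rw [sum_sigma']
  refine sum_nbij'
    (fun u => ⟨(u.2.1.1 + u.2.2.1, u.2.1.2 + u.2.2.2), ⟨(u.2.1.1, u.2.2.1), (u.2.1.2, u.2.2.2)⟩⟩)
    (fun u => ⟨(u.2.1.1 + u.2.2.1, u.2.1.2 + u.2.2.2), ⟨(u.2.1.1, u.2.2.1), (u.2.1.2, u.2.2.2)⟩⟩)
    ?_ ?_ ?_ ?_ ?_ <;>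
  rintro ⟨⟨a, b⟩, ⟨⟨c, d⟩, ⟨e, g⟩⟩⟩ <;>
  simp +contextual [HasAntidiagonal.mem_antidiagonal] <;> omega

theorem sum_antidiagonal_mul_pow_mul_add_pow {R : Type*} [CommSemiring R] (a : ℕ → R)
    (t s : R) (n : ℕ) :
    ∑ kl ∈ antidiagonal n, a kl.1 * t ^ kl.1 * (t + s) ^ kl.2 =
      ∑ jb ∈ antidiagonal n,
        (∑ ki ∈ antidiagonal jb.1, a ki.1 * (ki.2 + jb.2).choose jb.2) * t ^ jb.1 * s ^ jb.2 := by
  have hexpand : ∀ kl ∈ antidiagonal n, a kl.1 * t ^ kl.1 * (t + s) ^ kl.2 =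
      ∑ ib ∈ antidiagonal kl.2,
        a kl.1 * (ib.1 + ib.2).choose ib.2 * t ^ (kl.1 + ib.1) * s ^ ib.2 := by
    intro kl _
    rw [(Commute.all t s).add_pow', mul_sum]
    refine sum_congr rfl fun ib hib => ?_
    rw [HasAntidiagonal.mem_antidiagonal] at hib
    rw [nsmul_eq_mul, ← hib, Nat.choose_symm_add]
    ring
  rw [sum_congr rfl hexpand, sum_antidiagonal_sum_antidiagonal_assoc n
    (fun k i b => a k * (i + b).choose b * t ^ (k + i) * s ^ b)]
  refine sum_congr rfl fun jb _ => ?_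
  rw [sum_mul, sum_mul]
  refine sum_congr rfl fun ki hki => ?_
  rw [HasAntidiagonal.mem_antidiagonal] at hki
  rw [hki]

namespace Nat

theorem sum_antidiagonal_choose_add_mul_choose_add (p q n : ℕ) :
    ∑ ij ∈ antidiagonal n, (p + ij.1).choose p * (q + ij.2).choose q =
      (p + q + 1 + n).choose (p + q + 1) := by
  have h := congrArg (coeff n) (pow_add (PowerSeries.mk 1 : ℤ⟦X⟧) (p + 1) (q + 1))
  rw [show p + 1 + (q + 1) = p + q + 1 + 1 by ring, mk_one_pow_eq_mk_choose_add,
    mk_one_pow_eq_mk_choose_add, mk_one_pow_eq_mk_choose_add, coeff_mul] at h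
  simp only [coeff_mk] at h
  exact_mod_cast h.symm

theorem sum_antidiagonal_catalan_mul_choose (a b : ℕ) :
    ∑ x ∈ antidiagonal a, ∑ y ∈ antidiagonal b,
        catalan x.1 * (2 * x.1 + y.1).choose (2 * x.1) *
          (catalan x.2 * (2 * x.2 + y.2).choose (2 * x.2)) =
      catalan (a + 1) * (2 * a + 1 + b).choose (2 * a + 1) := by
  rw [catalan_succ', sum_mul]
  refine sum_congr rfl fun x hx => ?_
  rw [HasAntidiagonal.mem_antidiagonal] at hx
  have h := sum_antidiagonal_choose_add_mul_choose_add (2 * x.1) (2 * x.2) b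
  rw [show 2 * x.1 + 2 * x.2 + 1 = 2 * a + 1 by omega] at h
  rw [← h, mul_sum]
  exact sum_congr rfl fun y _ => by ring

theorem sum_antidiagonal_choose_mul_choose_succ (n j : ℕ) :
    ∑ ki ∈ antidiagonal j, j.choose ki.1 * n.choose (ki.1 + 1) = (n + j).choose (j + 1) := by
  rw [add_choose_eq, Finset.Nat.sum_antidiagonal_succ]
  simp only [choose_succ_self, mul_zero, zero_add]
  refine sum_congr rfl fun ki hki => ?_
  rw [HasAntidiagonal.mem_antidiagonal] at hki
  rw [mul_comm, ← hki, choose_symm_add]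

theorem mul_catalan_mul_choose {n j : ℕ} (h : j ≤ n) :
    n * (catalan j * (n + j).choose (2 * j)) = n.choose j * (n + j).choose (j + 1) := by
  have hcentral : (2 * j).choose j = (j + 1) * catalan j := by
    rw [← centralBinom_eq_two_mul_choose, succ_mul_catalan_eq_centralBinom]
  have hmul : (n + j).choose (2 * j) * (2 * j).choose j = (n + j).choose j * n.choose j := by
    rw [choose_mul (by omega), show n + j - j = n by omega, show 2 * j - j = j by omega]
  have hsucc : (n + j).choose (j + 1) * (j + 1) = (n + j).choose j * n := by
    rw [choose_succ_right_eq, show n + j - j = n by omega]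
  apply Nat.eq_of_mul_eq_mul_left (succ_pos j)
  calc (j + 1) * (n * (catalan j * (n + j).choose (2 * j)))
      = n * ((n + j).choose (2 * j) * (2 * j).choose j) := by rw [hcentral]; ring
    _ = n.choose j * ((n + j).choose (j + 1) * (j + 1)) := by rw [hmul, hsucc]; ring
    _ = (j + 1) * (n.choose j * (n + j).choose (j + 1)) := by ring

theorem sum_antidiagonal_choose_mul_choose_succ_mul_choose (j b : ℕ) :
    ∑ ki ∈ antidiagonal j,
        (j + b).choose ki.1 * (j + b).choose (ki.1 + 1) * (ki.2 + b).choose b =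
      (j + b) * (catalan j * (2 * j + b).choose (2 * j)) := by
  have hterm : ∀ ki ∈ antidiagonal j, (j + b).choose ki.1 * (j + b).choose (ki.1 + 1) *
      (ki.2 + b).choose b = (j + b).choose j * (j.choose ki.1 * (j + b).choose (ki.1 + 1)) := by
    intro ki hki
    rw [HasAntidiagonal.mem_antidiagonal] at hki
    have h := choose_mul (n := j + b) (k := j) (s := ki.1) (by omega)
    rw [show j + b - ki.1 = ki.2 + b by omega, show j - ki.1 = ki.2 by omega,
      choose_symm_add (a := ki.2)] at h
    rw [mul_right_comm, ← h]
    ring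
  rw [sum_congr rfl hterm, ← mul_sum, sum_antidiagonal_choose_mul_choose_succ,
    ← mul_catalan_mul_choose (by omega), show j + b + j = 2 * j + b by ring]

end Nat

section NarayanaCatalan

variable {R : Type*} [CommSemiring R] (t s : R)

def narayanaCatalan (n : ℕ) : R :=
  ∑ ab ∈ antidiagonal n,
    ((catalan ab.1 * (2 * ab.1 + ab.2).choose (2 * ab.1) : ℕ) : R) * t ^ ab.1 * s ^ ab.2

theorem narayanaCatalan_succ_eq_pow_add (m : ℕ) :
    narayanaCatalan t s (m + 1) = s ^ (m + 1) +
      ∑ ab ∈ antidiagonal m, ((catalan (ab.1 + 1) *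
        (2 * ab.1 + 2 + ab.2).choose (2 * ab.1 + 2) : ℕ) : R) * t ^ (ab.1 + 1) * s ^ ab.2 := by
  rw [narayanaCatalan, Nat.sum_antidiagonal_succ]
  simp [mul_add, add_assoc]

theorem mul_narayanaCatalan_eq_pow_add (m : ℕ) :
    s * narayanaCatalan t s m = s ^ (m + 1) +
      ∑ ab ∈ antidiagonal m, ((catalan (ab.1 + 1) *
        (2 * ab.1 + 1 + ab.2).choose (2 * ab.1 + 2) : ℕ) : R) * t ^ (ab.1 + 1) * s ^ ab.2 := by
  cases m with
  | zero => simp [narayanaCatalan, pow_succ]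
  | succ m =>
    rw [narayanaCatalan_succ_eq_pow_add, Nat.sum_antidiagonal_succ', mul_add, mul_sum,
      pow_succ' s (m + 1), Nat.choose_eq_zero_of_lt (by omega), mul_zero, Nat.cast_zero,
      zero_mul, zero_mul, zero_add]
    congr 1
    refine sum_congr rfl fun ab _ => ?_
    rw [show 2 * ab.1 + 1 + (ab.2 + 1) = 2 * ab.1 + 2 + ab.2 by ring]
    ring

theorem sum_antidiagonal_narayanaCatalan_mul (m : ℕ) :
    ∑ ij ∈ antidiagonal m, narayanaCatalan t s ij.1 * narayanaCatalan t s ij.2 =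
      ∑ ab ∈ antidiagonal m, ((catalan (ab.1 + 1) *
        (2 * ab.1 + 1 + ab.2).choose (2 * ab.1 + 1) : ℕ) : R) * t ^ ab.1 * s ^ ab.2 := by
  simp only [narayanaCatalan, sum_mul_sum]
  rw [sum_antidiagonal_sum_antidiagonal_transpose]
  refine sum_congr rfl fun ab _ => ?_
  rw [← Nat.sum_antidiagonal_catalan_mul_choose, Nat.cast_sum, sum_mul, sum_mul]
  refine sum_congr rfl fun x hx => ?_
  rw [Nat.cast_sum, sum_mul, sum_mul]
  refine sum_congr rfl fun y hy => ?_
  rw [HasAntidiagonal.mem_antidiagonal] at hx hy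
  rw [← hx, ← hy]
  push_cast
  ring

theorem narayanaCatalan_succ (m : ℕ) :
    narayanaCatalan t s (m + 1) = s * narayanaCatalan t s m +
      t * ∑ ij ∈ antidiagonal m, narayanaCatalan t s ij.1 * narayanaCatalan t s ij.2 := by
  rw [narayanaCatalan_succ_eq_pow_add, mul_narayanaCatalan_eq_pow_add,
    sum_antidiagonal_narayanaCatalan_mul, mul_sum, add_assoc, ← sum_add_distrib]
  congr 1
  refine sum_congr rfl fun ab _ => ?_
  rw [show 2 * ab.1 + 2 + ab.2 = 2 * ab.1 + 1 + ab.2 + 1 by ring, Nat.choose_succ_succ]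
  push_cast
  ring

theorem mk_narayanaCatalan_eq :
    PowerSeries.mk (narayanaCatalan t s) = 1 + C s * X * PowerSeries.mk (narayanaCatalan t s) +
      C t * X * PowerSeries.mk (narayanaCatalan t s) ^ 2 := by
  ext n
  cases n with
  | zero => simp [narayanaCatalan]
  | succ m =>
    simp only [mul_assoc, map_add, coeff_C_mul, coeff_succ_X_mul, coeff_mk, coeff_one]
    simp [sq, coeff_mul, narayanaCatalan_succ]

end NarayanaCatalan

def narayanaCoeff (n k : ℕ) : ℚ := ((n - 1).choose k * n.choose k : ℚ) / (k + 1)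

theorem mul_narayanaCoeff {n : ℕ} (hn : 0 < n) (k : ℕ) :
    n * narayanaCoeff n k = n.choose k * n.choose (k + 1) := by
  have h := Nat.add_one_mul_choose_eq (n - 1) k
  rw [Nat.sub_add_cancel hn] at h
  have h' : (n : ℚ) * (n - 1).choose k = n.choose (k + 1) * (k + 1) := by exact_mod_cast h
  rw [narayanaCoeff]
  field_simp
  linear_combination (n.choose k : ℚ) * h'

theorem sum_antidiagonal_narayanaCoeff_mul_choose {j b : ℕ} (h : 0 < j + b) :
    ∑ ki ∈ antidiagonal j, narayanaCoeff (j + b) ki.1 * (ki.2 + b).choose b =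
      ((catalan j * (2 * j + b).choose (2 * j) : ℕ) : ℚ) := by
  have hn : ((j + b : ℕ) : ℚ) ≠ 0 := by positivity
  apply mul_left_cancel₀ hn
  rw [mul_sum]
  simp_rw [← mul_assoc, mul_narayanaCoeff h]
  exact_mod_cast Nat.sum_antidiagonal_choose_mul_choose_succ_mul_choose j b

theorem narayanaPoly_eq_narayanaCatalan (n : ℕ) :
    narayanaPoly n = narayanaCatalan Polynomial.X (1 - Polynomial.X) n := by
  rcases Nat.eq_zero_or_pos n with rfl | hn
  · simp [narayanaPoly, narayanaCatalan]
  calc narayanaPoly n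
      = ∑ kl ∈ antidiagonal n, Polynomial.C (narayanaCoeff n kl.1) * Polynomial.X ^ kl.1 *
          (Polynomial.X + (1 - Polynomial.X)) ^ kl.2 := by
        rw [narayanaPoly, if_neg hn.ne', Nat.sum_antidiagonal_eq_sum_range_succ_mk, sum_range_succ]
        simp [narayanaCoeff, Polynomial.smul_eq_C_mul,
          Nat.choose_eq_zero_of_lt (by omega : n - 1 < n)]
    _ = narayanaCatalan Polynomial.X (1 - Polynomial.X) n := by
      rw [sum_antidiagonal_mul_pow_mul_add_pow (fun k => Polynomial.C (narayanaCoeff n k)),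
        narayanaCatalan]
      refine sum_congr rfl fun jb hjb => ?_
      rw [HasAntidiagonal.mem_antidiagonal] at hjb
      simp_rw [← map_natCast Polynomial.C, ← map_mul, ← map_sum]
      rw [← hjb, sum_antidiagonal_narayanaCoeff_mul_choose (by omega)]

theorem narayana_gf_functional_equation :
    let f : PowerSeries (Polynomial ℚ) := PowerSeries.mk narayanaPoly
    let T : PowerSeries (Polynomial ℚ) := PowerSeries.C (Polynomial.X : Polynomial ℚ)
    T * X * f ^ 2 = f - 1 - X * f + T * X * f := by
  intro f T
  have hf : f = PowerSeries.mk (narayanaCatalan Polynomial.X (1 - Polynomial.X)) :=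
    congrArg PowerSeries.mk (funext narayanaPoly_eq_narayanaCatalan)
  have h := mk_narayanaCatalan_eq (Polynomial.X : Polynomial ℚ) (1 - Polynomial.X)
  rw [← hf, map_sub, map_one] at h
  linear_combination -h
end

section
/- For all n ≥ 0, ∑_{k=0}^n C(2n, n-k) L_{2k}(x) = x^{2n}, where L_m(x) are the special Lucas polynomials. -/
open Finset Polynomial

lemma aux_sum_lucas (n : ℕ) (t : ℚ) (ht : t ≠ 0) :
    ∑ k ∈ range (n + 1), ((2 * n).choose (n - k) : ℚ) *
        (if k = 0 then 1 else t ^ (2 * k) + t⁻¹ ^ (2 * k)) = (t + t⁻¹) ^ (2 * n) := by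
  have htt : t * t⁻¹ = 1 := mul_inv_cancel₀ ht
  have hsplit : 2 * n + 1 = n + (n + 1) := by ring
  have hR : (t + t⁻¹) ^ (2 * n) =
      (∑ i ∈ range n, t ^ i * t⁻¹ ^ (2 * n - i) * ((2 * n).choose i : ℚ)) +
      ∑ i ∈ range (n + 1), t ^ (n + i) * t⁻¹ ^ (2 * n - (n + i)) *
        ((2 * n).choose (n + i) : ℚ) := by
    rw [add_pow, hsplit, Finset.sum_range_add]
  rw [hR]
  -- Part A : reflect
  have hA : ∑ i ∈ range n, t ^ i * t⁻¹ ^ (2 * n - i) * ((2 * n).choose i : ℚ) =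
      ∑ i ∈ range n, ((2 * n).choose (n - (i + 1)) : ℚ) * t⁻¹ ^ (2 * (i + 1)) := by
    rw [← Finset.sum_range_reflect]
    refine Finset.sum_congr rfl fun i hi => ?_
    have hin : i < n := Finset.mem_range.mp hi
    have h1 : n - 1 - i = n - (i + 1) := by omega
    have h2 : 2 * n - (n - 1 - i) = (2 * (i + 1)) + (n - (i + 1)) := by omega
    have h3 : n - 1 - i = n - (i + 1) := by omega
    rw [h2, pow_add, h1]
    have : t ^ (n - (i + 1)) * (t⁻¹ ^ (2 * (i + 1)) * t⁻¹ ^ (n - (i + 1))) =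
        (t * t⁻¹) ^ (n - (i + 1)) * t⁻¹ ^ (2 * (i + 1)) := by
      rw [mul_pow]; ring
    rw [this, htt, one_pow, one_mul]
    ring
  -- Part B
  have hB : ∑ i ∈ range (n + 1), t ^ (n + i) * t⁻¹ ^ (2 * n - (n + i)) *
        ((2 * n).choose (n + i) : ℚ) =
      ∑ i ∈ range (n + 1), ((2 * n).choose (n - i) : ℚ) * t ^ (2 * i) := by
    refine Finset.sum_congr rfl fun i hi => ?_
    have hin : i ≤ n := Nat.lt_succ_iff.mp (Finset.mem_range.mp hi)
    have h1 : 2 * n - (n + i) = n - i := by omega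
    have h2 : (2 * n).choose (n + i) = (2 * n).choose (n - i) := by
      have h3 : n + i ≤ 2 * n := by omega
      have := Nat.choose_symm h3
      have h4 : 2 * n - (n + i) = n - i := by omega
      rw [h4] at this
      exact this.symm
    have h5 : n + i = 2 * i + (n - i) := by omega
    rw [h1, h2, h5, pow_add]
    have : t ^ (2 * i) * t ^ (n - i) * t⁻¹ ^ (n - i) =
        t ^ (2 * i) * (t * t⁻¹) ^ (n - i) := by rw [mul_pow]; ring
    rw [this, htt, one_pow, mul_one]
    ring
  rw [hA, hB]
  -- now the LHS
  rw [Finset.sum_range_succ' (fun k => ((2 * n).choose (n - k) : ℚ) *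
      (if k = 0 then 1 else t ^ (2 * k) + t⁻¹ ^ (2 * k)))]
  simp only [if_neg (Nat.succ_ne_zero _), if_pos rfl, Nat.sub_zero, mul_one]
  have hL : ∑ i ∈ range (n + 1), ((2 * n).choose (n - i) : ℚ) * t ^ (2 * i) =
      ∑ i ∈ range n, ((2 * n).choose (n - (i + 1)) : ℚ) * t ^ (2 * (i + 1)) +
        ((2 * n).choose n : ℚ) := by
    rw [Finset.sum_range_succ' (fun i => ((2 * n).choose (n - i) : ℚ) * t ^ (2 * i))]
    simp
  rw [hL]
  simp only [if_true, mul_one, mul_add, Finset.sum_add_distrib]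
  ring

theorem pow_even_eq_sum_lucas
    (L : ℕ → Polynomial ℚ)
    (h0 : L 0 = 1) (h1 : L 1 = X) (h2 : L 2 = X ^ 2 - 2)
    (hrec : ∀ n, L (n + 3) = X * L (n + 2) - L (n + 1)) :
    ∀ n, ∑ k ∈ range (n + 1), (((2 * n).choose (n - k) : ℚ)) • L (2 * k) =
      (X : Polynomial ℚ) ^ (2 * n) := by
  have hev : ∀ t : ℚ, t ≠ 0 → ∀ m : ℕ,
      eval (t + t⁻¹) (L (m + 1)) = t ^ (m + 1) + t⁻¹ ^ (m + 1) := by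
    intro t ht
    have htt : t * t⁻¹ = 1 := mul_inv_cancel₀ ht
    have key : ∀ m : ℕ,
        eval (t + t⁻¹) (L (m + 1)) = t ^ (m + 1) + t⁻¹ ^ (m + 1) ∧
        eval (t + t⁻¹) (L (m + 2)) = t ^ (m + 2) + t⁻¹ ^ (m + 2) := by
      intro m
      induction m with
      | zero =>
        refine ⟨by simp [h1], ?_⟩
        rw [h2]
        simp only [eval_sub, eval_pow, eval_X, eval_ofNat]
        linear_combination 2 * htt
      | succ m ih =>
        refine ⟨ih.2, ?_⟩
        have : m + 1 + 2 = m + 3 := rfl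
        rw [this, hrec m]
        simp only [eval_sub, eval_mul, eval_add, eval_X, ih.1, ih.2]
        linear_combination (t ^ (m + 1) + t⁻¹ ^ (m + 1)) * htt
    exact fun m => (key m).1
  intro n
  apply Polynomial.eq_of_infinite_eval_eq
  apply Set.infinite_of_injective_forall_mem
    (f := fun i : ℕ => ((i : ℚ) + 2) + ((i : ℚ) + 2)⁻¹)
  · have hmono : StrictMono (fun i : ℕ => ((i : ℚ) + 2) + ((i : ℚ) + 2)⁻¹) := by
      intro a b hab
      have hx : (0 : ℚ) < (a : ℚ) + 2 := by positivity
      have hy : (0 : ℚ) < (b : ℚ) + 2 := by positivity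
      have hxy : (a : ℚ) + 2 + 1 ≤ (b : ℚ) + 2 := by
        have : (a : ℚ) + 1 ≤ b := by exact_mod_cast hab
        linarith
      have h1 : ((a : ℚ) + 2)⁻¹ ≤ 1 / 2 := by
        have h2a : (2 : ℚ) ≤ (a : ℚ) + 2 := by
          have := Nat.cast_nonneg (α := ℚ) a; linarith
        have := one_div_le_one_div_of_le (by norm_num : (0:ℚ) < 2) h2a
        rw [inv_eq_one_div]
        linarith
      have h2 : (0 : ℚ) < ((b : ℚ) + 2)⁻¹ := by positivity
      simp only
      linarith
    exact hmono.injective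
  · intro i
    set t : ℚ := (i : ℚ) + 2 with hts
    have ht0 : (0 : ℚ) < t := by rw [hts]; positivity
    have ht : t ≠ 0 := ne_of_gt ht0
    show eval (t + t⁻¹) _ = eval (t + t⁻¹) _
    rw [eval_finset_sum, eval_pow, eval_X]
    have : ∀ k ∈ range (n + 1),
        eval (t + t⁻¹) (((2 * n).choose (n - k) : ℚ) • L (2 * k)) =
        ((2 * n).choose (n - k) : ℚ) *
          (if k = 0 then 1 else t ^ (2 * k) + t⁻¹ ^ (2 * k)) := by
      intro k _
      rw [eval_smul, smul_eq_mul]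
      congr 1
      rcases Nat.eq_zero_or_pos k with hk | hk
      · subst hk; simp [h0]
      · have hk1 : 2 * k = (2 * k - 1) + 1 := by omega
        rw [if_neg (by omega), hk1, hev t ht (2 * k - 1)]
    rw [Finset.sum_congr rfl this, aux_sum_lucas n t ht]
end

section
/- For all n ≥ 0, ∑_{k=0}^n C(2n+1, n-k) L_{2k+1}(x) = x^{2n+1}, where L_m(x) are the special Lucas polynomials. -/
/-!
Substituting `x = y + y⁻¹` turns `L_m(x)` into `y ^ m + y⁻¹ ^ m` (the recurrence is that of
`y ^ m + y⁻¹ ^ m`), and the claimed identity into the binomial expansion of `(y + y⁻¹) ^ (2n+1)`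
with the terms `j` and `2n+1-j` paired up. Over `ℂ` every `x` has this form, which pins down the
polynomials.
-/

open Finset Polynomial

section MulEqOne

variable {R : Type*} [CommSemiring R] {y z : R}

theorem pow_add_mul_pow_of_mul_eq_one (h : y * z = 1) (a b : ℕ) :
    y ^ (a + b) * z ^ a = y ^ b := by
  rw [pow_add, mul_right_comm, ← mul_pow, h, one_pow, one_mul]

theorem add_pow_odd_of_mul_eq_one (h : y * z = 1) (n : ℕ) :
    (y + z) ^ (2 * n + 1) =
      ∑ k ∈ range (n + 1), (2 * n + 1).choose (n - k) • (y ^ (2 * k + 1) + z ^ (2 * k + 1)) := by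
  have hzy : z * y = 1 := by rw [mul_comm, h]
  rw [add_pow, show 2 * n + 1 + 1 = (n + 1) + (n + 1) by ring, sum_range_add,
    ← sum_range_reflect _ (n + 1), ← sum_add_distrib]
  refine sum_congr rfl fun k hk => ?_
  have hk : k ≤ n := Nat.lt_succ_iff.mp (mem_range.mp hk)
  have hlow : y ^ (n - k) * z ^ (2 * n + 1 - (n - k)) = z ^ (2 * k + 1) := by
    rw [show 2 * n + 1 - (n - k) = n - k + (2 * k + 1) by omega, mul_comm,
      pow_add_mul_pow_of_mul_eq_one hzy]
  have hhigh : y ^ (n + 1 + k) * z ^ (2 * n + 1 - (n + 1 + k)) = y ^ (2 * k + 1) := by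
    rw [show n + 1 + k = n - k + (2 * k + 1) by omega,
      show 2 * n + 1 - (n - k + (2 * k + 1)) = n - k by omega,
      pow_add_mul_pow_of_mul_eq_one h]
  have hchoose : (2 * n + 1).choose (n + 1 + k) = (2 * n + 1).choose (n - k) := by
    rw [← Nat.choose_symm (by omega), show 2 * n + 1 - (n + 1 + k) = n - k by omega]
  rw [show n + 1 - 1 - k = n - k by omega, hlow, hhigh, hchoose, nsmul_eq_mul]
  ring

end MulEqOne

theorem IsAlgClosed.exists_add_eq_of_mul_eq_one {K : Type*} [Field K] [IsAlgClosed K] (x : K) :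
    ∃ y z : K, y * z = 1 ∧ y + z = x := by
  obtain ⟨y, hy⟩ := IsAlgClosed.exists_root (C 1 * X ^ 2 + C (-x) * X + C 1)
    (by rw [degree_quadratic one_ne_zero]; decide)
  refine ⟨y, x - y, ?_, by ring⟩
  simp only [IsRoot, eval_add, eval_mul, eval_C, eval_pow, eval_X] at hy
  linear_combination -hy

theorem aeval_add_of_mul_eq_one {R A : Type*} [CommRing R] [CommRing A] [Algebra R A]
    (L : ℕ → R[X]) (h1 : L 1 = X) (h2 : L 2 = X ^ 2 - 2)
    (hrec : ∀ n, L (n + 3) = X * L (n + 2) - L (n + 1)) {y z : A} (h : y * z = 1) (m : ℕ) :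
    aeval (y + z) (L (m + 1)) = y ^ (m + 1) + z ^ (m + 1) := by
  induction m using Nat.twoStepInduction with
  | zero => simp [h1]
  | one =>
    simp only [h2, map_sub, map_pow, aeval_X, map_ofNat]
    linear_combination 2 * h
  | more m ih1 ih2 =>
    simp only [hrec m, map_sub, map_mul, aeval_X, ih1, ih2]
    linear_combination (y ^ (m + 1) + z ^ (m + 1)) * h

theorem pow_odd_eq_sum_lucas_general
    (L : ℕ → Polynomial ℚ)
    (h1 : L 1 = X) (h2 : L 2 = X ^ 2 - 2)
    (hrec : ∀ n, L (n + 3) = X * L (n + 2) - L (n + 1)) :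
    ∀ n, ∑ k ∈ range (n + 1), (((2 * n + 1).choose (n - k) : ℚ)) • L (2 * k + 1) =
      (X : Polynomial ℚ) ^ (2 * n + 1) := by
  intro n
  apply map_injective (algebraMap ℚ ℂ) (algebraMap ℚ ℂ).injective
  refine Polynomial.funext fun x => ?_
  obtain ⟨y, z, h, rfl⟩ := IsAlgClosed.exists_add_eq_of_mul_eq_one x
  simp only [eval_map_algebraMap, map_sum, Nat.cast_smul_eq_nsmul, map_nsmul, map_pow, aeval_X,
    aeval_add_of_mul_eq_one L h1 h2 hrec h]
  exact (add_pow_odd_of_mul_eq_one h n).symm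

theorem pow_odd_eq_sum_lucas
    (L : ℕ → Polynomial ℚ)
    (h0 : L 0 = 1) (h1 : L 1 = X) (h2 : L 2 = X ^ 2 - 2)
    (hrec : ∀ n, L (n + 3) = X * L (n + 2) - L (n + 1)) :
    ∀ n, ∑ k ∈ range (n + 1), (((2 * n + 1).choose (n - k) : ℚ)) • L (2 * k + 1) =
      (X : Polynomial ℚ) ^ (2 * n + 1) :=
  pow_odd_eq_sum_lucas_general L h1 h2 hrec
end

section
/- The polynomials D_{n,k}(t) = ∑_{j=0}^{n-k} C(n,j) C(n,k+j) t^j admit the gamma-expansion D_{n,k}(t) = ∑_{j=0}^{⌊(n-k)/2⌋} C(2j+k,j) C(n,2j+k) t^j (1+t)^{n-k-2j}. -/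
/-!
`D_{n,k}(t)` is the coefficient of `x^(n-k)` in `(1 + t x)^n (1 + x)^n`. Regrouping the product of
the two linear factors as `(1 + t x)(1 + x) = t x^2 + (1 + (1 + t) x)` and expanding the `n`-th power
binomially in `t x^2` gives the coefficient as `∑ j, C(n,j) C(n-j, n-k-2j) t^j (1+t)^(n-k-2j)`,
and `C(n,j) C(n-j, n-k-2j) = C(2j+k, j) C(n, 2j+k)` are both the trinomial coefficient
`n! / (j! (j+k)! (n-k-2j)!)`.
-/

open Finset Polynomial

theorem Nat.choose_mul_choose_sub_sub_two_mul {n k j : ℕ} (h : 2 * j + k ≤ n) :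
    n.choose j * (n - j).choose (n - k - 2 * j) = (2 * j + k).choose j * n.choose (2 * j + k) := by
  rw [mul_comm ((2 * j + k).choose j), Nat.choose_mul (by omega),
    ← Nat.choose_symm (n := n - j) (by omega)]
  congr 2
  omega

namespace Polynomial

variable {R : Type*} [CommSemiring R]

theorem coeff_one_add_C_mul_X_pow (t : R) (n d : ℕ) :
    ((1 + C t * X) ^ n).coeff d = n.choose d * t ^ d := by
  rw [add_comm, add_pow, finsetSum_coeff]
  simp only [one_pow, mul_one, mul_pow, ← C_pow, ← C_eq_natCast, coeff_mul_C, coeff_C_mul,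
    coeff_X_pow, mul_ite, mul_zero, ite_mul, zero_mul, sum_ite_eq, mem_range]
  split_ifs with hd
  · ring
  · simp [Nat.choose_eq_zero_of_lt (not_lt.mp hd)]

theorem coeff_one_add_C_mul_X_pow_mul_one_add_X_pow (t : R) (n d : ℕ) :
    ((1 + C t * X) ^ n * (1 + X) ^ n).coeff d =
      ∑ j ∈ range (d + 1), (n.choose j * n.choose (d - j) : R) * t ^ j := by
  rw [coeff_mul, Nat.sum_antidiagonal_eq_sum_range_succ_mk]
  simp only [coeff_one_add_C_mul_X_pow, coeff_one_add_X_pow]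
  exact sum_congr rfl fun j _ => by ring

theorem one_add_C_mul_X_mul_one_add_X (t : R) :
    (1 + C t * X) * (1 + X) = C t * X ^ 2 + (1 + C (1 + t) * X) := by
  rw [map_add, map_one]
  ring

theorem coeff_C_mul_X_sq_add_one_add_C_mul_X_pow (s t : R) (n d : ℕ) :
    ((C t * X ^ 2 + (1 + C s * X)) ^ n).coeff d =
      ∑ j ∈ range (d / 2 + 1),
        (n.choose j * (n - j).choose (d - 2 * j) : R) * t ^ j * s ^ (d - 2 * j) := by
  have hterm (j : ℕ) :
      ((C t * X ^ 2) ^ j * (1 + C s * X) ^ (n - j) * (n.choose j : R[X])).coeff d =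
        if 2 * j ≤ d then (n.choose j * (n - j).choose (d - 2 * j) : R) * t ^ j * s ^ (d - 2 * j)
        else 0 := by
    simp only [mul_pow, ← C_pow, ← pow_mul, ← C_eq_natCast, coeff_mul_C, mul_assoc, coeff_C_mul,
      coeff_X_pow_mul', coeff_one_add_C_mul_X_pow]
    split_ifs <;> ring
  rw [add_pow, finsetSum_coeff]
  simp only [hterm]
  rw [← sum_filter]
  refine sum_subset (fun j hj => ?_) (fun j hj hj' => ?_)
  · simp only [mem_filter, mem_range] at hj ⊢
    omega
  · simp only [mem_filter, mem_range, not_and] at hj hj'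
    simp [Nat.choose_eq_zero_of_lt (show n < j by omega)]

end Polynomial

theorem sum_choose_mul_choose_add_mul_pow_eq_gamma {R : Type*} [CommSemiring R] (t : R)
    {n k : ℕ} (hk : k ≤ n) :
    ∑ j ∈ range (n - k + 1), (n.choose j * n.choose (k + j) : R) * t ^ j =
      ∑ j ∈ range ((n - k) / 2 + 1),
        ((2 * j + k).choose j * n.choose (2 * j + k) : R) * (t ^ j * (1 + t) ^ (n - k - 2 * j)) :=
  calc _ = ((1 + C t * X) ^ n * (1 + X) ^ n).coeff (n - k) := by
        rw [coeff_one_add_C_mul_X_pow_mul_one_add_X_pow]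
        refine sum_congr rfl fun j hj => ?_
        have hj : j ≤ n - k := Nat.lt_succ_iff.mp (mem_range.mp hj)
        rw [← Nat.choose_symm (n := n) (k := k + j) (by omega), show n - (k + j) = n - k - j by omega]
    _ = ((C t * X ^ 2 + (1 + C (1 + t) * X)) ^ n).coeff (n - k) := by
        rw [← mul_pow, one_add_C_mul_X_mul_one_add_X]
    _ = _ := by
        rw [coeff_C_mul_X_sq_add_one_add_C_mul_X_pow]
        refine sum_congr rfl fun j hj => ?_
        have hj : j ≤ (n - k) / 2 := Nat.lt_succ_iff.mp (mem_range.mp hj)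
        rw [← Nat.cast_mul, Nat.choose_mul_choose_sub_sub_two_mul (by omega)]
        push_cast
        ring

theorem D_nk_gamma_expansion (n k : ℕ) (hk : k ≤ n) :
    (∑ j ∈ range (n - k + 1),
        ((n.choose j * n.choose (k + j) : ℚ)) • (X : Polynomial ℚ) ^ j) =
      ∑ j ∈ range ((n - k) / 2 + 1),
        (((2 * j + k).choose j * n.choose (2 * j + k) : ℚ)) •
          ((X : Polynomial ℚ) ^ j * (1 + X) ^ (n - k - 2 * j)) := by
  simp only [smul_eq_C_mul, map_mul, map_natCast]
  exact sum_choose_mul_choose_add_mul_pow_eq_gamma X hk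
end

section
/- For m ≥ 1, the m-fold convolution of central binomial coefficients satisfies ∑_{i_1+...+i_m = n} C(2i_1,i_1) C(2i_2,i_2) ⋯ C(2i_m,i_m) = 4^n · C(m/2 + n - 1, n), where the latter is the generalized binomial coefficient (m/2)(m/2+1)⋯(m/2+n-1)/n!. -/
/-!
The generating function of the central binomial coefficients is `(1 - 4X)^(-1/2)`, so the
`m`-fold convolution is the `n`-th coefficient of `(1 - 4X)^(-m/2)`, namely
`(-4)^n * choose (-m/2) n = 4^n * multichoose (m/2) n`. The exponent law for binomial series
behind this is the Chu–Vandermonde identity for generalized binomial coefficients.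
-/

open Finset PowerSeries Nat

theorem ascPochhammer_eval_eq_prod_range {R : Type*} [CommSemiring R] (n : ℕ) (r : R) :
    (ascPochhammer R n).eval r = ∏ j ∈ range n, (r + j) := by
  induction n with
  | zero => simp
  | succ n ih => rw [ascPochhammer_succ_eval, ih, prod_range_succ]

theorem Ring.multichoose_eq_prod_range_div {K : Type*} [Field K] [CharZero K] (r : K) (n : ℕ) :
    Ring.multichoose r n = (∏ j ∈ range n, (r + j)) / n ! := by
  rw [eq_div_iff (mod_cast factorial_ne_zero n), mul_comm, ← nsmul_eq_mul,
    Ring.factorial_nsmul_multichoose_eq_ascPochhammer, Polynomial.ascPochhammer_smeval_eq_eval,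
    ascPochhammer_eval_eq_prod_range]

theorem centralBinom_eq_four_pow_mul_multichoose {K : Type*} [Field K] [CharZero K] (n : ℕ) :
    (centralBinom n : K) = 4 ^ n * Ring.multichoose (2⁻¹ : K) n := by
  induction n with
  | zero => simp
  | succ n ih =>
    have hrec : ((n + 1 : ℕ) : K) * centralBinom (n + 1) = 2 * (2 * n + 1) * centralBinom n := by
      exact_mod_cast succ_mul_centralBinom_succ n
    rw [ih, Ring.multichoose_eq_prod_range_div] at hrec
    rw [Ring.multichoose_eq_prod_range_div, prod_range_succ, factorial_succ, Nat.cast_mul]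
    have hn : ((n + 1 : ℕ) : K) ≠ 0 := mod_cast succ_ne_zero n
    have hf : (n ! : K) ≠ 0 := mod_cast factorial_ne_zero n
    rw [← mul_right_inj' hn, hrec]
    field_simp
    ring

namespace PowerSeries

theorem coeff_prod_fin {R : Type*} [CommSemiring R] {m : ℕ} (f : Fin m → R⟦X⟧) (n : ℕ) :
    coeff n (∏ j, f j) = ∑ l ∈ Finset.Nat.antidiagonalTuple m n, ∏ j, coeff (l j) (f j) := by
  rw [coeff_prod]
  exact Finset.sum_equiv Finsupp.equivFunOnFinite (by simp [Finset.Nat.mem_antidiagonalTuple])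
    (by simp)

variable {R : Type*} [CommRing R] [BinomialRing R]

theorem binomialSeries_nsmul {A : Type*} [Ring A] [Algebra R A] (k : ℕ) (r : R) :
    binomialSeries A (k • r) = binomialSeries A r ^ k := by
  induction k with
  | zero => simp
  | succ k ih => rw [succ_nsmul, binomialSeries_add, ih, pow_succ]

theorem coeff_rescale_binomialSeries_neg (a r : R) (n : ℕ) :
    coeff n (rescale a (binomialSeries R (-r))) = (-a) ^ n * Ring.multichoose r n := by
  rw [coeff_rescale, binomialSeries_coeff, Ring.choose_neg', smul_eq_mul, mul_one, Units.smul_def,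
    zsmul_eq_mul, Int.cast_negOnePow_natCast]
  ring

end PowerSeries

theorem central_binom_m_fold_convolution_general (m n : ℕ) :
    (∑ f ∈ Finset.Nat.antidiagonalTuple m n,
        ∏ j : Fin m, ((2 * f j).choose (f j) : ℚ)) =
      4 ^ n * (∏ j ∈ range n, ((m : ℚ) / 2 + j)) / n.factorial := by
  set S : ℚ⟦X⟧ := rescale (-4) (binomialSeries ℚ (-2⁻¹ : ℚ))
  have choose_eq_coeff : ∀ k, ((2 * k).choose k : ℚ) = coeff k S := fun k => by
    rw [← centralBinom_eq_two_mul_choose, coeff_rescale_binomialSeries_neg,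
      centralBinom_eq_four_pow_mul_multichoose, neg_neg]
  simp_rw [choose_eq_coeff]
  rw [← coeff_prod_fin, prod_const, Finset.card_fin, ← map_pow,
    ← binomialSeries_nsmul, nsmul_eq_mul, mul_neg, coeff_rescale_binomialSeries_neg, neg_neg,
    Ring.multichoose_eq_prod_range_div, mul_div_assoc, ← div_eq_mul_inv]

theorem central_binom_m_fold_convolution (m n : ℕ) (hm : 1 ≤ m) :
    (∑ f ∈ Finset.Nat.antidiagonalTuple m n,
        ∏ j : Fin m, ((2 * f j).choose (f j) : ℚ)) =
      4 ^ n * (∏ j ∈ range n, ((m : ℚ) / 2 + j)) / n.factorial :=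
  central_binom_m_fold_convolution_general m n
end

section
/- For all n ≥ 0, ∑_{k=0}^n M_k(t) M_{n-k}(t) = (1/2) ∑_{k=0}^n C(2n+2, 2k+1) t^k, where M_n(t) = ∑_{k=0}^n C(n,k)^2 t^k is the type-B Narayana polynomial. -/
/-!
Let `y = ∑ Mₙ(t) zⁿ` and `D = 1 - 2(1+t) z + (1-t)² z²`. The three-term recurrence
`(n+2) M_{n+2} = (2n+3)(1+t) M_{n+1} - (n+1)(1-t)² Mₙ` says exactly that `2 y' D + y D' = 0`,
so `(y² D)' = y (2 y' D + y D') = 0` and `y² D = 1`.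
On the other side, `Rₙ(t) = ½ ∑ C(2n+2, 2k+1) tᵏ` satisfies `4s Rₙ(s²) = (1+s)^(2n+2) - (1-s)^(2n+2)`,
a difference of powers of the roots `(1 ± s)²` of `u² - 2(1+s²) u + (1-s²)²`; hence
`∑ Rₙ zⁿ · D = 1`, and `y² = ∑ Rₙ zⁿ`.
-/

open scoped Polynomial PowerSeries

namespace PowerSeries

variable {R : Type*} [CommRing R] (a b : R) (f : R⟦X⟧)

theorem coeff_zero_mul_quadratic : coeff 0 (f * (1 + C a * X + C b * X ^ 2)) = coeff 0 f := by
  simp [mul_add, ← mul_assoc]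

theorem coeff_one_mul_quadratic :
    coeff 1 (f * (1 + C a * X + C b * X ^ 2)) = coeff 1 f + a * coeff 0 f := by
  simp [mul_add, ← mul_assoc, coeff_mul_X_pow', mul_comm a]

theorem coeff_add_two_mul_quadratic (n : ℕ) :
    coeff (n + 2) (f * (1 + C a * X + C b * X ^ 2)) =
      coeff (n + 2) f + a * coeff (n + 1) f + b * coeff n f := by
  simp [mul_add, ← mul_assoc, coeff_mul_X_pow, mul_comm _ a, mul_comm _ b]

theorem derivative_quadratic :
    d⁄dX R (1 + C a * X + C b * X ^ 2) = C a + C (2 * b) * X := by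
  simp only [map_add, map_mul, derivative_one, derivative_C, derivative_X, derivative_pow,
    Derivation.leibniz, smul_eq_mul, map_ofNat]
  push_cast
  ring

theorem derivative_sq_mul (g : R⟦X⟧) :
    d⁄dX R (f ^ 2 * g) = f * (2 * d⁄dX R f * g + f * d⁄dX R g) := by
  rw [Derivation.leibniz, derivative_pow, smul_eq_mul, smul_eq_mul]
  push_cast
  ring

end PowerSeries

namespace Polynomial

theorem coeff_sum_range_smul_X_pow {R : Type*} [Semiring R] {n : ℕ} {c : ℕ → R}
    (hc : ∀ k, n < k → c k = 0) (k : ℕ) :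
    (∑ i ∈ Finset.range (n + 1), c i • (X : R[X]) ^ i).coeff k = c k := by
  simp only [finsetSum_coeff, coeff_smul, coeff_X_pow, smul_eq_mul, mul_ite, mul_one, mul_zero,
    Finset.sum_ite_eq, Finset.mem_range]
  split_ifs with h
  · rfl
  · exact (hc k (by omega)).symm

theorem coeff_one_sub_X_pow (R : Type*) [CommRing R] (n k : ℕ) :
    ((1 - X : R[X]) ^ n).coeff k = (-1) ^ k * n.choose k := by
  have h : (1 - X : R[X]) ^ n = ∑ i ∈ Finset.range (n + 1), ((-1) ^ i * n.choose i : R) • X ^ i := by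
    rw [sub_eq_neg_add, add_pow]
    refine Finset.sum_congr rfl fun i _ => ?_
    simp only [one_pow, mul_one, smul_eq_C_mul, neg_pow (X : R[X]), C_mul, C_pow, map_neg,
      map_one, map_natCast]
    ring
  rw [h, coeff_sum_range_smul_X_pow]
  intro k hk
  simp [Nat.choose_eq_zero_of_lt hk]

end Polynomial

namespace Nat

variable {K : Type*} [CommRing K]

theorem cast_choose_succ_right_eq (n k : ℕ) :
    (n.choose (k + 1) : K) * (k + 1) = n.choose k * (n - k) := by
  rcases le_or_gt k n with hkn | hnk
  · exact_mod_cast congrArg (Nat.cast : ℕ → K) (choose_succ_right_eq n k)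
  · simp [choose_eq_zero_of_lt hnk, choose_eq_zero_of_lt (hnk.trans (lt_succ_self k))]

theorem choose_sq_recurrence (n k : ℕ) :
    ((n : K) + 2) * ((n + 2).choose (k + 2) : K) ^ 2 =
      (2 * n + 3) * (((n + 1).choose (k + 2) : K) ^ 2 + ((n + 1).choose (k + 1) : K) ^ 2) -
        (n + 1) * ((n.choose (k + 2) : K) ^ 2 - 2 * (n.choose (k + 1) : K) ^ 2 +
          (n.choose k : K) ^ 2) := by
  have h₁ := cast_choose_succ_right_eq (K := K) n k
  have h₂ := cast_choose_succ_right_eq (K := K) n (k + 1)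
  simp only [choose_succ_succ', cast_add] at h₂ ⊢
  push_cast at h₂
  linear_combination (-2 * ((n.choose (k + 1) : K) + n.choose (k + 2))) * h₁ +
    2 * ((n.choose k : K) + n.choose (k + 1)) * h₂

end Nat

section NarayanaPolynomials

open Finset Polynomial

noncomputable def narayanaB (n : ℕ) : ℚ[X] :=
  ∑ i ∈ range (n + 1), ((n.choose i : ℚ) ^ 2) • (X : ℚ[X]) ^ i

theorem coeff_narayanaB (n k : ℕ) : (narayanaB n).coeff k = (n.choose k : ℚ) ^ 2 :=
  coeff_sum_range_smul_X_pow (fun k hk => by simp [Nat.choose_eq_zero_of_lt hk]) k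

theorem narayanaB_zero : narayanaB 0 = 1 := by simp [narayanaB]

theorem narayanaB_one : narayanaB 1 = 1 + X := by simp [narayanaB, sum_range_succ]

theorem narayanaB_add_two (n : ℕ) :
    ((n : ℚ[X]) + 2) * narayanaB (n + 2) =
      (2 * (n : ℚ[X]) + 3) * ((1 + X) * narayanaB (n + 1)) -
        ((n : ℚ[X]) + 1) * ((1 - X) ^ 2 * narayanaB n) := by
  have h : ∀ p : ℚ[X], (1 - X) ^ 2 * p = p - 2 * (X * p) + X * (X * p) := fun p => by ring
  ext (_ | _ | k)
  all_goals simp only [h, add_mul, mul_add, mul_sub, one_mul, mul_assoc, coeff_add, coeff_sub,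
    coeff_natCast_mul, coeff_ofNat_mul, coeff_X_mul, coeff_X_mul_zero, coeff_narayanaB]
  · simp only [Nat.choose_zero_right, Nat.cast_one, one_pow, mul_one, mul_zero, add_zero, sub_zero]
    ring
  · simp only [zero_add, Nat.choose_one_right, Nat.choose_zero_right, Nat.cast_add,
      Nat.cast_ofNat, Nat.cast_one, one_pow, mul_one, mul_zero, add_zero]
    ring
  · linear_combination Nat.choose_sq_recurrence (K := ℚ) n k

noncomputable def halfOddChoose (n : ℕ) : ℚ[X] :=
  (1 / 2 : ℚ) • ∑ k ∈ range (n + 1), (((2 * n + 2).choose (2 * k + 1) : ℚ)) • (X : ℚ[X]) ^ k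

theorem coeff_halfOddChoose (n k : ℕ) :
    (halfOddChoose n).coeff k = ((2 * n + 2).choose (2 * k + 1) : ℚ) / 2 := by
  rw [halfOddChoose, coeff_smul, coeff_sum_range_smul_X_pow, smul_eq_mul, one_div, inv_mul_eq_div]
  intro k hk
  rw [Nat.choose_eq_zero_of_lt (by omega), Nat.cast_zero]

theorem four_mul_X_mul_expand_halfOddChoose (n : ℕ) :
    4 * X * expand ℚ 2 (halfOddChoose n) = (1 + X) ^ (2 * n + 2) - (1 - X) ^ (2 * n + 2) := by
  ext (_ | i)
  · simp [coeff_one_add_X_pow, coeff_one_sub_X_pow]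
  rw [mul_assoc, coeff_ofNat_mul, coeff_X_mul, coeff_expand two_pos, coeff_sub,
    coeff_one_add_X_pow, coeff_one_sub_X_pow]
  obtain ⟨k, rfl | rfl⟩ := Nat.even_or_odd' i
  · rw [if_pos (dvd_mul_right 2 k), Nat.mul_div_cancel_left k two_pos, coeff_halfOddChoose,
      pow_succ, pow_mul, neg_one_sq, one_pow]
    ring
  · rw [if_neg (by omega), show 2 * k + 1 + 1 = 2 * (k + 1) by ring, pow_mul, neg_one_sq,
      one_pow]
    ring

theorem halfOddChoose_add_two (n : ℕ) :
    halfOddChoose (n + 2) =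
      2 * (1 + X) * halfOddChoose (n + 1) - (1 - X) ^ 2 * halfOddChoose n := by
  apply expand_injective two_pos
  apply mul_left_cancel₀ (show 4 * X ≠ (0 : ℚ[X]) by simp)
  have h := four_mul_X_mul_expand_halfOddChoose
  simp only [map_sub, map_mul, map_add, map_one, map_ofNat, map_pow, expand_X]
  linear_combination h (n + 2) - 2 * (1 + X ^ 2) * h (n + 1) + (1 - X ^ 2) ^ 2 * h n

theorem halfOddChoose_zero : halfOddChoose 0 = 1 := by
  simp [halfOddChoose]

theorem halfOddChoose_one : halfOddChoose 1 = 2 + 2 * X := by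
  norm_num [halfOddChoose, sum_range_succ, smul_smul, two_smul]
  ring

end NarayanaPolynomials

section GeneratingFunctions

open PowerSeries

noncomputable def narayanaDenom : ℚ[X]⟦X⟧ :=
  1 + C (-(2 * (1 + Polynomial.X))) * X + C ((1 - Polynomial.X) ^ 2) * X ^ 2

theorem mk_halfOddChoose_mul_narayanaDenom : mk halfOddChoose * narayanaDenom = 1 := by
  refine PowerSeries.ext fun n => ?_
  rcases n with _ | _ | n
  · rw [narayanaDenom, coeff_zero_mul_quadratic]
    simp [halfOddChoose_zero]
  · rw [narayanaDenom, coeff_one_mul_quadratic]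
    simp only [zero_add, coeff_mk, halfOddChoose_one, halfOddChoose_zero, coeff_one, one_ne_zero,
      ↓reduceIte]
    ring
  · rw [narayanaDenom, coeff_add_two_mul_quadratic]
    simp only [coeff_mk, halfOddChoose_add_two, coeff_one, Nat.add_eq_zero_iff, one_ne_zero,
      and_false, ↓reduceIte]
    ring

theorem mk_narayanaB_differential_equation :
    2 * d⁄dX ℚ[X] (mk narayanaB) * narayanaDenom + mk narayanaB * d⁄dX ℚ[X] narayanaDenom = 0 := by
  have hy : ∀ n, coeff n (d⁄dX ℚ[X] (mk narayanaB)) = (n + 1) * narayanaB (n + 1) := fun n => by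
    rw [coeff_derivative, coeff_mk, mul_comm]
  rw [narayanaDenom, derivative_quadratic, mul_assoc, two_mul]
  refine PowerSeries.ext fun n => ?_
  rcases n with _ | _ | n
  · rw [map_add, map_add, coeff_zero_mul_quadratic]
    simp only [mul_add, ← mul_assoc, map_add, coeff_mul_C, coeff_zero_mul_X, coeff_mk, hy,
      map_zero, zero_add, narayanaB_zero]
    push_cast
    linear_combination 2 * narayanaB_one
  · rw [map_add, map_add, coeff_one_mul_quadratic]
    simp only [mul_add, ← mul_assoc, map_add, coeff_mul_C, coeff_succ_mul_X, coeff_mk, hy, map_zero]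
    have h := narayanaB_add_two 0
    push_cast at h ⊢
    linear_combination 2 * h
  · rw [map_add, map_add, coeff_add_two_mul_quadratic]
    simp only [mul_add, ← mul_assoc, map_add, coeff_mul_C, coeff_succ_mul_X, coeff_mk, hy, map_zero]
    have h := narayanaB_add_two (n + 1)
    push_cast at h ⊢
    linear_combination 2 * h

theorem mk_narayanaB_sq_mul_narayanaDenom : mk narayanaB ^ 2 * narayanaDenom = 1 := by
  apply derivative.ext
  · rw [derivative_sq_mul, mk_narayanaB_differential_equation, mul_zero, derivative_one]
  · simp [narayanaDenom, narayanaB_zero]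

theorem mk_narayanaB_sq : mk narayanaB ^ 2 = mk halfOddChoose := by
  have hD : IsUnit narayanaDenom := by
    simp [isUnit_iff_constantCoeff, narayanaDenom]
  exact hD.mul_right_cancel
    (mk_narayanaB_sq_mul_narayanaDenom.trans mk_halfOddChoose_mul_narayanaDenom.symm)

end GeneratingFunctions

open Finset Polynomial

/-- Convolution of type-B Narayana polynomials `M_n(t) = ∑ C(n,k)² tᵏ`. -/
theorem typeB_narayana_convolution (n : ℕ) :
    (∑ k ∈ range (n + 1),
        (∑ i ∈ range (k + 1), ((k.choose i : ℚ) ^ 2) • (X : Polynomial ℚ) ^ i) *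
          (∑ i ∈ range (n - k + 1), (((n - k).choose i : ℚ) ^ 2) • (X : Polynomial ℚ) ^ i)) =
      (1 / 2 : ℚ) • ∑ k ∈ range (n + 1),
        (((2 * n + 2).choose (2 * k + 1) : ℚ)) • (X : Polynomial ℚ) ^ k := by
  have h := congrArg (PowerSeries.coeff n) mk_narayanaB_sq
  rw [sq, PowerSeries.coeff_mul, Nat.sum_antidiagonal_eq_sum_range_succ_mk] at h
  simp only [PowerSeries.coeff_mk] at h
  exact h
end

section
/- For all n ≥ 0, (∑_k C(n+1,2k) t^k) · (∑_k C(n+1,2k+1) t^k) = (1/2) ∑_{k=0}^n C(2n+2, 2k+1) t^k as polynomials in t. -/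
open Finset Polynomial

private lemma sum_range_two_mul_split {M : Type*} [AddCommMonoid M] (f : ℕ → M) (m : ℕ) :
    ∑ i ∈ range (2 * m), f i = ∑ i ∈ range m, f (2 * i) + ∑ i ∈ range m, f (2 * i + 1) := by
  induction m with
  | zero => simp
  | succ m ih =>
      have h2 : 2 * (m + 1) = (2 * m + 1) + 1 := by ring
      rw [h2, Finset.sum_range_succ, Finset.sum_range_succ, Finset.sum_range_succ,
        Finset.sum_range_succ, ih]
      abel

private lemma choose_key (n m : ℕ) :
    (2 * n + 2).choose (2 * m + 1) =
      2 * ∑ i ∈ range (m + 1), (n + 1).choose (2 * i) * (n + 1).choose (2 * (m - i) + 1) := by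
  have h : (2 * n + 2) = (n + 1) + (n + 1) := by ring
  rw [h, Nat.add_choose_eq, Finset.Nat.sum_antidiagonal_eq_sum_range_succ_mk]
  rw [show (2 * m + 1).succ = 2 * (m + 1) by omega, sum_range_two_mul_split (fun i => (n + 1).choose i * (n + 1).choose (2 * m + 1 - i))]
  have he : ∑ i ∈ range (m + 1), (n + 1).choose (2 * i) * (n + 1).choose (2 * m + 1 - 2 * i)
      = ∑ i ∈ range (m + 1), (n + 1).choose (2 * i) * (n + 1).choose (2 * (m - i) + 1) := by
    refine Finset.sum_congr rfl fun i hi => ?_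
    have : i ≤ m := Nat.lt_succ_iff.mp (Finset.mem_range.mp hi)
    have e : 2 * m + 1 - 2 * i = 2 * (m - i) + 1 := by omega
    rw [e]
  have ho : ∑ i ∈ range (m + 1), (n + 1).choose (2 * i + 1) * (n + 1).choose (2 * m + 1 - (2 * i + 1))
      = ∑ i ∈ range (m + 1), (n + 1).choose (2 * i) * (n + 1).choose (2 * (m - i) + 1) := by
    rw [← Finset.sum_range_reflect]
    refine Finset.sum_congr rfl fun i hi => ?_
    have : i ≤ m := Nat.lt_succ_iff.mp (Finset.mem_range.mp hi)
    have e1 : m + 1 - 1 - i = m - i := by omega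
    rw [e1]
    have e2 : 2 * m + 1 - (2 * (m - i) + 1) = 2 * i := by omega
    rw [e2, mul_comm]
  rw [he, ho]
  ring

private lemma coeff_sum_smul_pow (N : ℕ) (c : ℕ → ℚ) (m : ℕ) :
    (∑ k ∈ range N, c k • (X : Polynomial ℚ) ^ k).coeff m = if m < N then c m else 0 := by
  rw [Polynomial.finset_sum_coeff]
  simp only [Polynomial.coeff_smul, Polynomial.coeff_X_pow, smul_eq_mul, mul_ite, mul_one,
    mul_zero]
  rw [Finset.sum_ite_eq (range N) m c]
  simp [Finset.mem_range]

theorem even_odd_binomial_product (n : ℕ) :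
    (∑ k ∈ range (n + 2), (((n + 1).choose (2 * k) : ℚ)) • (X : Polynomial ℚ) ^ k) *
        (∑ k ∈ range (n + 2), (((n + 1).choose (2 * k + 1) : ℚ)) • (X : Polynomial ℚ) ^ k) =
      (1 / 2 : ℚ) • ∑ k ∈ range (n + 1),
        (((2 * n + 2).choose (2 * k + 1) : ℚ)) • (X : Polynomial ℚ) ^ k := by
  ext m
  rw [Polynomial.coeff_mul, Polynomial.coeff_smul, coeff_sum_smul_pow]
  have hA : ∀ i, (∑ k ∈ range (n + 2), (((n + 1).choose (2 * k) : ℚ)) • (X : Polynomial ℚ) ^ k).coeff i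
      = ((n + 1).choose (2 * i) : ℚ) := by
    intro i
    rw [coeff_sum_smul_pow]
    split_ifs with h
    · rfl
    · rw [Nat.choose_eq_zero_of_lt (by omega)]; simp
  have hB : ∀ i, (∑ k ∈ range (n + 2), (((n + 1).choose (2 * k + 1) : ℚ)) • (X : Polynomial ℚ) ^ k).coeff i
      = ((n + 1).choose (2 * i + 1) : ℚ) := by
    intro i
    rw [coeff_sum_smul_pow]
    split_ifs with h
    · rfl
    · rw [Nat.choose_eq_zero_of_lt (by omega)]; simp
  simp only [hA, hB]
  have hR : (if m < n + 1 then ((2 * n + 2).choose (2 * m + 1) : ℚ) else 0)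
      = ((2 * n + 2).choose (2 * m + 1) : ℚ) := by
    split_ifs with h
    · rfl
    · rw [Nat.choose_eq_zero_of_lt (by omega)]; simp
  rw [hR]
  rw [Finset.Nat.sum_antidiagonal_eq_sum_range_succ_mk]
  have key := choose_key n m
  have : ((2 * n + 2).choose (2 * m + 1) : ℚ)
      = 2 * ∑ i ∈ range (m + 1), ((n + 1).choose (2 * i) : ℚ) * ((n + 1).choose (2 * (m - i) + 1) : ℚ) := by
    rw [key]; push_cast; ring
  rw [this, smul_eq_mul, Nat.succ_eq_add_one]
  ring
end

section
/- For all n ≥ 1 and 0 ≤ k ≤ n, the hypergeometric-type identity ∑_{j=0}^k [C(2j,j) C(n,2j) (2j)!! / ∏_{i=0}^{j-1}(m+2i+1)] · C(n-2j, k-j) / C(n,k) = ∏_{j=0}^{k-1}(2n+m-1-2j) / ∏_{j=0}^{k-1}(2k+m-1-2j) holds for every positive integer m. -/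
/-!
Write `x^{(j)} = x (x - 2) ⋯ (x - 2j + 2)` for the falling factorial of step 2. The identity
`C(2j,j) C(n,2j) j! C(n-2j,k-j) = C(k,j) (n-k)(n-k-1)⋯(n-k-j+1) C(n,k)` turns the `j`-th summand into
`C(k,j) (2n-2k)^{(j)} (m+2k-1)^{(k-j)} / ((m+1)(m+3)⋯(m+2k-1))`, after splitting the denominator as
`(m+1)⋯(m+2j-1)` times `(m+2k-1)^{(k-j)}`. The sum is then a Chu–Vandermonde convolution, equal to
`(2n+m-1)^{(k)}`, and the denominator is `(2k+m-1)^{(k)}` read backwards.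
-/

open Finset Nat

theorem prod_range_add_sub_natCast_eq_sum {R : Type*} [CommRing R] (x y : R) (k : ℕ) :
    ∏ i ∈ range k, (x + y - i) = ∑ j ∈ range (k + 1),
      k.choose j * (∏ i ∈ range j, (x - i)) * ∏ i ∈ range (k - j), (y - i) := by
  have hprod (r : R) (l : ℕ) : (descPochhammer ℤ l).smeval r = ∏ i ∈ range l, (r - i) := by
    rw [← Polynomial.aeval_eq_smeval, Polynomial.aeval_def, ← Polynomial.eval_map,
      descPochhammer_map, descPochhammer_eval_eq_prod_range]
  simp only [← hprod, Ring.descPochhammer_smeval_add k (Commute.all x y),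
    Nat.sum_antidiagonal_eq_sum_range_succ_mk, mul_assoc]

theorem prod_range_sub_mul_eq_pow_mul {K : Type*} [Field K] {d : K} (hd : d ≠ 0) (x : K)
    (j : ℕ) :
    ∏ i ∈ range j, (x - d * i) = d ^ j * ∏ i ∈ range j, (x / d - i) := by
  rw [show d ^ j = d ^ #(range j) by rw [card_range], pow_card_mul_prod]
  refine prod_congr rfl fun i _ => ?_
  field_simp

theorem prod_range_add_sub_mul_eq_sum {K : Type*} [Field K] {d : K} (hd : d ≠ 0) (x y : K)
    (k : ℕ) :
    ∏ i ∈ range k, (x + y - d * i) = ∑ j ∈ range (k + 1),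
      k.choose j * (∏ i ∈ range j, (x - d * i)) * ∏ i ∈ range (k - j), (y - d * i) := by
  simp only [prod_range_sub_mul_eq_pow_mul hd, add_div, prod_range_add_sub_natCast_eq_sum,
    mul_sum]
  refine sum_congr rfl fun j hj => ?_
  rw [← Nat.add_sub_cancel' (Nat.le_of_lt_succ (mem_range.mp hj)), pow_add,
    Nat.add_sub_cancel_left]
  ring

theorem prod_range_add_mul_eq_mul_prod_range {R : Type*} [CommRing R] (a d : R) {j k : ℕ}
    (h : j ≤ k) :
    ∏ i ∈ range k, (a + d * i) =
      (∏ i ∈ range j, (a + d * i)) * ∏ i ∈ range (k - j), (a + d * ((k : R) - 1 - i)) := by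
  rw [← prod_range_mul_prod_Ico _ h, prod_Ico_eq_prod_range, ← prod_range_reflect _ (k - j)]
  congr 1
  refine prod_congr rfl fun i hi => ?_
  rw [mem_range] at hi
  rw [show j + (k - j - 1 - i) = k - 1 - i by omega, Nat.cast_sub (by omega),
    Nat.cast_sub (by omega)]
  push_cast
  ring

theorem choose_two_mul_mul_choose_mul_factorial_mul_choose {n k j : ℕ} (hk : k ≤ n) (hj : j ≤ k) :
    (2 * j).choose j * n.choose (2 * j) * j ! * (n - 2 * j).choose (k - j) =
      k.choose j * (n - k).descFactorial j * n.choose k := by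
  calc (2 * j).choose j * n.choose (2 * j) * j ! * (n - 2 * j).choose (k - j)
      = n.choose j * ((n - j).choose j * (n - j - j).choose (k - j)) * j ! := by
        rw [mul_comm ((2 * j).choose j), choose_mul (by omega), two_mul, Nat.add_sub_cancel,
          Nat.sub_add_eq]
        ring
    _ = n.choose j * ((n - j).choose (k - j) * (n - k).choose j) * j ! := by
        rw [← choose_mul hj, ← choose_symm hj, choose_mul (by omega),
          show n - j - (k - j) = n - k by omega, Nat.sub_sub_self hj]
    _ = n.choose k * k.choose j * (j ! * (n - k).choose j) := by
        rw [choose_mul hj]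
        ring
    _ = k.choose j * (n - k).descFactorial j * n.choose k := by
        rw [descFactorial_eq_factorial_mul_choose]
        ring

theorem natCast_descFactorial_eq_prod_range {R : Type*} [CommRing R] (n j : ℕ) :
    (n.descFactorial j : R) = ∏ i ∈ range j, ((n : R) - i) := by
  rw [← descPochhammer_eval_eq_descFactorial, descPochhammer_eval_eq_prod_range]

theorem prod_range_odd_add_eq_mul_prod_range (m : ℕ) {j k : ℕ} (hj : j ≤ k) :
    ∏ i ∈ range k, ((m : ℚ) + 2 * i + 1) =
      (∏ i ∈ range j, ((m : ℚ) + 2 * i + 1)) *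
        ∏ i ∈ range (k - j), ((m : ℚ) + 2 * k - 1 - 2 * i) :=
  calc ∏ i ∈ range k, ((m : ℚ) + 2 * i + 1) = ∏ i ∈ range k, ((m + 1 : ℚ) + 2 * i) :=
        prod_congr rfl fun i _ => by ring
    _ = _ := prod_range_add_mul_eq_mul_prod_range _ _ hj
    _ = _ := by congr 1 <;> exact prod_congr rfl fun i _ => by ring

theorem summand_eq {m n k j : ℕ} (hk : k ≤ n) (hj : j ≤ k) :
    (((2 * j).choose j * n.choose (2 * j) : ℚ) * (2 ^ j * j !) /
          ∏ i ∈ range j, ((m : ℚ) + 2 * i + 1)) * ((n - 2 * j).choose (k - j) : ℚ) / n.choose k =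
      k.choose j * (∏ i ∈ range j, (2 * ((n : ℚ) - k) - 2 * i)) *
          (∏ i ∈ range (k - j), ((m : ℚ) + 2 * k - 1 - 2 * i)) /
        ∏ i ∈ range k, ((m : ℚ) + 2 * i + 1) := by
  have hfalling :
      ∏ i ∈ range j, (2 * ((n : ℚ) - k) - 2 * i) = 2 ^ j * (n - k).descFactorial j := by
    rw [prod_range_sub_mul_eq_pow_mul two_ne_zero, natCast_descFactorial_eq_prod_range,
      Nat.cast_sub hk, mul_div_cancel_left₀ _ two_ne_zero]
  have hden : ∏ i ∈ range k, ((m : ℚ) + 2 * i + 1) ≠ 0 := by positivity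
  rw [prod_range_odd_add_eq_mul_prod_range m hj] at hden ⊢
  obtain ⟨hlow, hhigh⟩ := mul_ne_zero_iff.mp hden
  have hchoose : (n.choose k : ℚ) ≠ 0 := by exact_mod_cast (choose_pos hk).ne'
  have key := congrArg (Nat.cast (R := ℚ))
    (choose_two_mul_mul_choose_mul_factorial_mul_choose hk hj)
  push_cast at key
  rw [hfalling]
  field_simp
  linear_combination key

theorem gauss_hypergeometric_identity_general (m n k : ℕ) (hk : k ≤ n) :
    ∑ j ∈ range (k + 1),
        (((2 * j).choose j * n.choose (2 * j) : ℚ) * (2 ^ j * j.factorial) /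
            ∏ i ∈ range j, ((m : ℚ) + 2 * i + 1)) *
          ((n - 2 * j).choose (k - j) : ℚ) / (n.choose k : ℚ) =
      (∏ j ∈ range k, (2 * (n : ℚ) + m - 1 - 2 * j)) /
        ∏ j ∈ range k, (2 * (k : ℚ) + m - 1 - 2 * j) := by
  have hden : ∏ i ∈ range k, ((m : ℚ) + 2 * i + 1) =
      ∏ j ∈ range k, (2 * (k : ℚ) + m - 1 - 2 * j) := by
    rw [prod_range_odd_add_eq_mul_prod_range m (zero_le k), prod_range_zero, one_mul,
      Nat.sub_zero]
    exact prod_congr rfl fun i _ => by ring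
  rw [sum_congr rfl fun j hj => summand_eq hk (le_of_lt_succ (mem_range.mp hj)), ← sum_div,
    ← prod_range_add_sub_mul_eq_sum two_ne_zero, hden]
  congr 1
  exact prod_congr rfl fun i _ => by ring

theorem gauss_hypergeometric_identity (m n k : ℕ) (hm : 1 ≤ m) (hn : 1 ≤ n)
    (hk : k ≤ n) :
    ∑ j ∈ range (k + 1),
        (((2 * j).choose j * n.choose (2 * j) : ℚ) * (2 ^ j * j.factorial) /
            ∏ i ∈ range j, ((m : ℚ) + 2 * i + 1)) *
          ((n - 2 * j).choose (k - j) : ℚ) / (n.choose k : ℚ) =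
      (∏ j ∈ range k, (2 * (n : ℚ) + m - 1 - 2 * j)) /
        ∏ j ∈ range k, (2 * (k : ℚ) + m - 1 - 2 * j) :=
  gauss_hypergeometric_identity_general m n k hk
end
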